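/- arXiv:1704.04437 — 4 statements merged into one kernel-verified Lean document; each statement's English description precedes it below -/
import Mathlib

section
/- Let m ≥ 2, let {1,…,m} be the disjoint union of n ≥ 2 non-empty subsets C_1,…,C_n, let Y be a Banach space of cotype q, and let r_1,…,r_n ∈ [1,∞), p_1,…,p_n ∈ [1,∞). Assume there exists k ∈ {1,…,n} with r_k ≥ q. Set 1/s = 1/r_k − Σ_{j≠k} |C_j|/p_j* and assume s > 0. Then every m-linear map T : X_1×⋯×X_m → Y that is multiple (r_k,p_k)-summing in the coordinates of C_k for each k = 1,…,n is multiple (s,𝐪)-summing, where 𝐪=(q_1,…,q_m) with q_j = p_k whenever j ∈ C_k. -/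
/-- The sequence `x` in `X` has weak `ℓ^p` norm at most `1`. -/
def WeakNormLEOne {X : Type*} [NormedAddCommGroup X] [NormedSpace ℝ X]
    (p : ℝ) (x : ℕ → X) : Prop :=
  ∀ φ : X →L[ℝ] ℝ, ‖φ‖ ≤ 1 → ∀ F : Finset ℕ, ∑ i ∈ F, |φ (x i)| ^ p ≤ 1

/-- An `m`-linear map `T` is multiple `(r, 𝐩)`-summing (stated, by homogeneity, for
sequences of weak `ℓ^{p_j}` norm at most one). -/
def MultipleSumming {m : ℕ} {X : Fin m → Type*} [∀ j, NormedAddCommGroup (X j)]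
    [∀ j, NormedSpace ℝ (X j)] {Y : Type*} [NormedAddCommGroup Y] [NormedSpace ℝ Y]
    (T : ContinuousMultilinearMap ℝ X Y) (r : ℝ) (p : Fin m → ℝ) : Prop :=
  ∃ C > 0, ∀ x : ∀ j, ℕ → X j, (∀ j, WeakNormLEOne (p j) (x j)) →
    ∀ F : Finset (Fin m → ℕ), ∑ i ∈ F, ‖T (fun j => x j (i j))‖ ^ r ≤ C ^ r

/-- `T` is multiple `(r, p)`-summing in the coordinates of `C`: the `|C|`-linear maps
`T^C(z) : x ↦ T(x, z)` are multiple `(r, p)`-summing, uniformly over `z` in the unit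
ball of `X^{C̄}`. -/
def CoordSumming {m : ℕ} {X : Fin m → Type*} [∀ j, NormedAddCommGroup (X j)]
    [∀ j, NormedSpace ℝ (X j)] {Y : Type*} [NormedAddCommGroup Y] [NormedSpace ℝ Y]
    (T : ContinuousMultilinearMap ℝ X Y) (C : Finset (Fin m)) (r p : ℝ) : Prop :=
  ∃ κ > 0, ∀ z : ∀ j, X j, (∀ j ∉ C, ‖z j‖ ≤ 1) →
    ∀ x : ∀ j, ℕ → X j, (∀ j ∈ C, WeakNormLEOne p (x j)) →
      ∀ F : Finset ({j : Fin m // j ∈ C} → ℕ),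
        ∑ i ∈ F, ‖T (fun j => if h : j ∈ C then x j (i ⟨j, h⟩) else z j)‖ ^ r ≤ κ ^ r

/-- `Y` has cotype `q`. -/
def HasCotype (Y : Type*) [NormedAddCommGroup Y] [NormedSpace ℝ Y] (q : ℝ) : Prop :=
  ∃ C > 0, ∀ n : ℕ, ∀ y : Fin n → Y,
    (∑ k, ‖y k‖ ^ q) ^ (1 / q) ≤
      C * ((∑ ε : Fin n → Bool, ‖∑ k, (if ε k then (1 : ℝ) else -1) • y k‖ ^ 2) / 2 ^ n)
        ^ ((1 : ℝ) / 2)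

/-!
The coordinates outside `C k` are added to the block `C k` one at a time. Suppose `T` is multiple
`(r, p)`-summing in the coordinates of `D`, uniformly in the others, and `r ≥ q`. Freezing the
indices in `D` turns `T` into linear maps `L_{i₀}` in a new coordinate `j₀`. For weights `w` in the
unit ball of `ℓ^{p*}` (with `p = p_{j₀}`) the vectors `w_g x_g` are unconditionally bounded by one,
so averaging the cotype inequality over signs and using the uniform bound gives
`∑_g w_g^r ∑_{i₀} ‖L_{i₀} x_g‖^r ≤ (C κ)^r`. The supremum over `w` is, by the duality between
`ℓ^{t/r}` and `ℓ^{p*/r}`, the `ℓ^{t/r}`-norm of the slice sums, and `ℓ^r ⊂ ℓ^t` then yields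
`(t, p)`-summability in `insert j₀ D` with `1/t = 1/r - 1/p*`. Each coordinate of `C l` costs
`1/p_l*`, which accumulates to the exponent `s`.
-/

open Finset

namespace Real

lemma sum_rpow_le_rpow_sum {ι : Type*} (s : Finset ι) {f : ι → ℝ} (hf : ∀ i ∈ s, 0 ≤ f i)
    {e : ℝ} (he : 1 ≤ e) : ∑ i ∈ s, f i ^ e ≤ (∑ i ∈ s, f i) ^ e := by
  induction s using Finset.cons_induction with
  | empty => simp [zero_rpow (by linarith : e ≠ 0)]
  | cons a s _ ih =>
    simp only [forall_mem_cons] at hf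
    rw [sum_cons, sum_cons]
    calc f a ^ e + ∑ i ∈ s, f i ^ e ≤ f a ^ e + (∑ i ∈ s, f i) ^ e := by gcongr; exact ih hf.2
      _ ≤ (f a + ∑ i ∈ s, f i) ^ e :=
        add_rpow_le_rpow_add hf.1 (sum_nonneg hf.2) he

lemma sum_rpow_le_sum_rpow_rpow {ι : Type*} (s : Finset ι) {f : ι → ℝ} (hf : ∀ i ∈ s, 0 ≤ f i)
    {r t : ℝ} (hr : 0 < r) (hrt : r ≤ t) :
    ∑ i ∈ s, f i ^ t ≤ (∑ i ∈ s, f i ^ r) ^ (t / r) := by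
  calc ∑ i ∈ s, f i ^ t = ∑ i ∈ s, (f i ^ r) ^ (t / r) := by
        refine sum_congr rfl fun i hi => ?_
        rw [← rpow_mul (hf i hi), mul_div_cancel₀ _ hr.ne']
    _ ≤ _ := sum_rpow_le_rpow_sum s (fun i hi => rpow_nonneg (hf i hi) r)
        ((one_le_div hr).mpr hrt)

lemma rpow_sum_div_card_le_sum_rpow_div_card {ι : Type*} [Fintype ι] [Nonempty ι] {f : ι → ℝ}
    (hf : ∀ i, 0 ≤ f i) {e : ℝ} (he : 1 ≤ e) :
    ((∑ i, f i) / Fintype.card ι) ^ e ≤ (∑ i, f i ^ e) / Fintype.card ι := by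
  have hc : (0 : ℝ) < Fintype.card ι := by exact_mod_cast Fintype.card_pos
  simpa only [← mul_sum, div_eq_inv_mul] using
    rpow_arith_mean_le_arith_mean_rpow univ (fun _ => (Fintype.card ι : ℝ)⁻¹) f
      (fun _ _ => by positivity) (by simp [hc.ne']) (fun i _ => hf i) he

lemma sum_mul_le_one_of_holderConjugate {ι : Type*} (G : Finset ι) {p p' : ℝ}
    (hpp' : p.HolderConjugate p') {w b : ι → ℝ} (hw : ∀ g, 0 ≤ w g) (hb : ∀ g, 0 ≤ b g)
    (hw1 : ∑ g ∈ G, w g ^ p' ≤ 1) (hb1 : ∑ g ∈ G, b g ^ p ≤ 1) :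
    ∑ g ∈ G, w g * b g ≤ 1 :=
  calc ∑ g ∈ G, w g * b g ≤ ∑ g ∈ G, (w g ^ p' / p' + b g ^ p / p) :=
        sum_le_sum fun g _ => young_inequality_of_nonneg (hw g) (hb g) hpp'.symm
    _ = (∑ g ∈ G, w g ^ p') / p' + (∑ g ∈ G, b g ^ p) / p := by
        rw [sum_add_distrib, sum_div, sum_div]
    _ ≤ 1 / p' + 1 / p := by
        gcongr
        exacts [hpp'.symm.pos.le, hpp'.pos.le]
    _ = 1 := by rw [one_div, one_div]; exact hpp'.symm.inv_add_inv_eq_one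

/-- The hypothesis on `w` says that `w` lies in the unit ball of `ℓ^{p*}` on `G`, phrased by
duality so that `p = 1` needs no infinite exponent. -/
lemma sum_rpow_le_of_forall_weighted_le {ι : Type*} (G : Finset ι) {a : ι → ℝ}
    (ha : ∀ g, 0 ≤ a g) {p r t M : ℝ} (hp : 1 ≤ p) (hr : 0 < r) (ht : 0 < t)
    (hprt : 1 / t = 1 / r - (1 - 1 / p)) (hM : 0 ≤ M)
    (h : ∀ w : ι → ℝ, (∀ g, 0 ≤ w g) →
      (∀ b : ι → ℝ, (∀ g, 0 ≤ b g) → ∑ g ∈ G, b g ^ p ≤ 1 → ∑ g ∈ G, w g * b g ≤ 1) →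
      ∑ g ∈ G, w g ^ r * a g ≤ M ^ r) :
    ∑ g ∈ G, a g ^ (t / r) ≤ M ^ t := by
  rcases hp.eq_or_lt with rfl | hp
  · have htr : t = r := by simpa using hprt
    subst htr
    simpa [div_self ht.ne'] using
      h (fun _ => 1) (fun _ => zero_le_one) fun b _ hb => by simpa using hb
  set p' := p.conjExponent
  have hpp' : p.HolderConjugate p' := .conjExponent hp
  have hrp' : r / p' = 1 - r / t := by
    have h1 : 1 / p' = 1 / r - 1 / t := by
      have := hpp'.inv_add_inv_eq_one
      simp only [one_div] at *
      linarith
    rw [div_eq_mul_one_div, h1]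
    field_simp
  set S := ∑ g ∈ G, a g ^ (t / r)
  have hS0 : 0 ≤ S := sum_nonneg fun g _ => rpow_nonneg (ha g) (t / r)
  rcases hS0.eq_or_lt with hS | hS
  · exact hS ▸ rpow_nonneg hM t
  have hat : ∀ g, 0 ≤ a g ^ (t / r) / S := fun g => div_nonneg (rpow_nonneg (ha g) _) hS.le
  -- the extremal weights for the duality between `ℓ^{t/r}` and `ℓ^{p*/r}`
  set w : ι → ℝ := fun g => (a g ^ (t / r) / S) ^ (1 / p')
  have hw : ∀ g, 0 ≤ w g := fun g => rpow_nonneg (hat g) _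
  have hw_norm : ∑ g ∈ G, w g ^ p' ≤ 1 := by
    have hw_pow : ∀ g, w g ^ p' = a g ^ (t / r) / S := fun g => by
      rw [← rpow_mul (hat g), one_div_mul_cancel hpp'.symm.ne_zero, rpow_one]
    rw [sum_congr rfl fun g _ => hw_pow g, ← sum_div, div_self hS.ne']
  have hw_sum : ∑ g ∈ G, w g ^ r * a g = S ^ (r / t) := by
    have htr : t / r * (r / p') + 1 = t / r := by rw [hrp']; field_simp; ring
    have hexp : ∀ g, w g ^ r * a g = a g ^ (t / r) / S ^ (r / p') := fun g => by
      rw [← rpow_mul (hat g), div_rpow (rpow_nonneg (ha g) _) hS.le, ← rpow_mul (ha g),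
        div_mul_eq_mul_div, one_div_mul_eq_div,
        ← rpow_add_one' (ha g) (by rw [htr]; exact (div_pos ht hr).ne'), htr]
    have hrt : 1 - r / p' = r / t := by rw [hrp']; ring
    rw [sum_congr rfl fun g _ => hexp g, ← sum_div,
      ← rpow_one_sub' hS.le (by rw [hrt]; exact (div_pos hr ht).ne'), hrt]
  calc S = (S ^ (r / t)) ^ (t / r) := by
        rw [← rpow_mul hS.le, div_mul_div_comm, mul_comm r t,
          div_self (mul_ne_zero ht.ne' hr.ne'), rpow_one]
    _ ≤ (M ^ r) ^ (t / r) := by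
        gcongr
        exact hw_sum ▸ h w hw fun b hb => sum_mul_le_one_of_holderConjugate G hpp' hw hb hw_norm
    _ = M ^ t := by rw [← rpow_mul hM, mul_div_cancel₀ _ hr.ne']

end Real

section Cotype

open Real

def CotypeMomentBound (Y : Type*) [NormedAddCommGroup Y] [NormedSpace ℝ Y] (r C : ℝ) : Prop :=
  ∀ (ι : Type) [Fintype ι] [DecidableEq ι] (y : ι → Y), ∑ k, ‖y k‖ ^ r ≤
    C ^ r * ((∑ ε : ι → Bool, ‖∑ k, (if ε k then (1 : ℝ) else -1) • y k‖ ^ r) /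
      2 ^ Fintype.card ι)

variable {Y : Type*} [NormedAddCommGroup Y] [NormedSpace ℝ Y]

lemma HasCotype.exists_const_fintype {q : ℝ} (hY : HasCotype Y q) :
    ∃ C > 0, ∀ (ι : Type) [Fintype ι] [DecidableEq ι] (y : ι → Y),
      (∑ k, ‖y k‖ ^ q) ^ (1 / q) ≤ C * ((∑ ε : ι → Bool,
        ‖∑ k, (if ε k then (1 : ℝ) else -1) • y k‖ ^ 2) / 2 ^ Fintype.card ι) ^ ((1 : ℝ) / 2) := by
  obtain ⟨C, hC, hcot⟩ := hY
  refine ⟨C, hC, fun ι _ _ y => ?_⟩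
  let e := Fintype.equivFin ι
  have hsigns : ∑ ε : Fin (Fintype.card ι) → Bool,
      ‖∑ k, (if ε k then (1 : ℝ) else -1) • y (e.symm k)‖ ^ 2 =
      ∑ ε : ι → Bool, ‖∑ k, (if ε k then (1 : ℝ) else -1) • y k‖ ^ 2 :=
    (Fintype.sum_equiv (e.arrowCongr (Equiv.refl Bool)) _ _ fun ε => by
      simp only [Equiv.arrowCongr_apply, Equiv.coe_refl, Function.comp_apply, id]
      rw [Equiv.sum_comp e.symm (fun k => (if ε k then (1 : ℝ) else -1) • y k)]).symm
  have := hcot _ fun k => y (e.symm k)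
  rwa [Equiv.sum_comp e.symm (fun k => ‖y k‖ ^ q), hsigns] at this

lemma HasCotype.exists_cotypeMomentBound {q r : ℝ} (hY : HasCotype Y q) (hq : 2 ≤ q)
    (hqr : q ≤ r) :
    ∃ C > 0, CotypeMomentBound Y r C := by
  obtain ⟨C, hC, hcot⟩ := hY.exists_const_fintype
  refine ⟨C, hC, fun ι _ _ y => ?_⟩
  have hq0 : 0 < q := by linarith
  have hr0 : 0 < r := by linarith
  set N : (ι → Bool) → ℝ := fun ε => ‖∑ k, (if ε k then (1 : ℝ) else -1) • y k‖
  have hcard : (Fintype.card (ι → Bool) : ℝ) = 2 ^ Fintype.card ι := by simp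
  have hN2 : 0 ≤ (∑ ε, N ε ^ 2) / 2 ^ Fintype.card ι := by positivity
  calc ∑ k, ‖y k‖ ^ r ≤ ((∑ k, ‖y k‖ ^ q) ^ (1 / q)) ^ r := by
        rw [← rpow_mul (by positivity), one_div_mul_eq_div]
        exact sum_rpow_le_sum_rpow_rpow _ (fun k _ => norm_nonneg _) hq0 hqr
    _ ≤ (C * ((∑ ε, N ε ^ 2) / 2 ^ Fintype.card ι) ^ ((1 : ℝ) / 2)) ^ r := by
        gcongr; exact hcot ι y
    _ = C ^ r * ((∑ ε, N ε ^ 2) / 2 ^ Fintype.card ι) ^ (r / 2) := by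
        rw [mul_rpow hC.le (by positivity), ← rpow_mul hN2, one_div_mul_eq_div]
    _ ≤ C ^ r * ((∑ ε, (N ε ^ 2) ^ (r / 2)) / 2 ^ Fintype.card ι) := by
        gcongr
        rw [← hcard]
        exact rpow_sum_div_card_le_sum_rpow_div_card (fun ε => by positivity)
          (by linarith)
    _ = C ^ r * ((∑ ε, N ε ^ r) / 2 ^ Fintype.card ι) := by
        congr 3 with ε
        rw [← rpow_natCast, ← rpow_mul (norm_nonneg _), Nat.cast_ofNat,
          mul_div_cancel₀ _ two_ne_zero]

lemma CotypeMomentBound.sum_sum_norm_rpow_le {E : Type*} [NormedAddCommGroup E]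
    [NormedSpace ℝ E] {r C κ : ℝ} (hY : CotypeMomentBound Y r C) (hC : 0 ≤ C) (hκ : 0 ≤ κ)
    {ι₀ : Type*} (L : ι₀ → E →L[ℝ] Y) (F₀ : Finset ι₀)
    (hL : ∀ u : E, ‖u‖ ≤ 1 → ∑ i ∈ F₀, ‖L i u‖ ^ r ≤ κ ^ r)
    {ι : Type} [DecidableEq ι] (G : Finset ι) (v : ι → E)
    (hv : ∀ c : ι → ℝ, (∀ k, |c k| ≤ 1) → ‖∑ k ∈ G, c k • v k‖ ≤ 1) :
    ∑ i ∈ F₀, ∑ k ∈ G, ‖L i (v k)‖ ^ r ≤ (C * κ) ^ r := by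
  set σ : (G → Bool) → E := fun ε => ∑ k : G, (if ε k then (1 : ℝ) else -1) • v k
  have hσ : ∀ ε, ‖σ ε‖ ≤ 1 := fun ε => by
    have := hv (fun k => if h : k ∈ G then (if ε ⟨k, h⟩ then 1 else -1) else 0)
      fun k => by split_ifs <;> simp
    rwa [← sum_coe_sort G, sum_congr rfl fun k _ => by rw [dif_pos k.2]] at this
  calc ∑ i ∈ F₀, ∑ k ∈ G, ‖L i (v k)‖ ^ r
      ≤ ∑ i ∈ F₀, C ^ r * ((∑ ε : G → Bool, ‖L i (σ ε)‖ ^ r) / 2 ^ Fintype.card G) :=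
        sum_le_sum fun i _ => by
          simpa only [σ, map_sum, map_smul, sum_coe_sort G fun k => ‖L i (v k)‖ ^ r] using
            hY G fun k => L i (v k)
    _ = C ^ r * ((∑ ε : G → Bool, ∑ i ∈ F₀, ‖L i (σ ε)‖ ^ r) / 2 ^ Fintype.card G) := by
        rw [← mul_sum, ← sum_div, sum_comm]
    _ ≤ C ^ r * ((∑ _ε : G → Bool, κ ^ r) / 2 ^ Fintype.card G) := by
        gcongr with ε
        exact hL _ (hσ ε)
    _ = (C * κ) ^ r := by
        rw [sum_const, card_univ, Fintype.card_fun, Fintype.card_bool, nsmul_eq_mul,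
          mul_rpow hC hκ]
        push_cast
        field_simp

end Cotype

lemma WeakNormLEOne.norm_sum_smul_le_one {X : Type*} [NormedAddCommGroup X] [NormedSpace ℝ X]
    {p : ℝ} {x : ℕ → X} (hx : WeakNormLEOne p x) {G : Finset ℕ} {w : ℕ → ℝ}
    (hw : ∀ g, 0 ≤ w g)
    (hwb : ∀ b : ℕ → ℝ, (∀ g, 0 ≤ b g) → ∑ g ∈ G, b g ^ p ≤ 1 → ∑ g ∈ G, w g * b g ≤ 1)
    (c : ℕ → ℝ) (hc : ∀ g, |c g| ≤ 1) : ‖∑ g ∈ G, c g • w g • x g‖ ≤ 1 := by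
  obtain ⟨φ, hφ, hφu⟩ := exists_dual_vector'' ℝ (∑ g ∈ G, c g • w g • x g)
  calc ‖∑ g ∈ G, c g • w g • x g‖ = φ (∑ g ∈ G, c g • w g • x g) := by simpa using hφu.symm
    _ = ∑ g ∈ G, c g * (w g * φ (x g)) := by simp only [map_sum, map_smul, smul_eq_mul]
    _ ≤ ∑ g ∈ G, w g * |φ (x g)| := sum_le_sum fun g _ =>
        calc c g * (w g * φ (x g)) ≤ |c g * (w g * φ (x g))| := le_abs_self _
          _ = |c g| * (w g * |φ (x g)|) := by rw [abs_mul, abs_mul, abs_of_nonneg (hw g)]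
          _ ≤ w g * |φ (x g)| :=
            mul_le_of_le_one_left (mul_nonneg (hw g) (abs_nonneg _)) (hc g)
    _ ≤ 1 := hwb _ (fun _ => abs_nonneg _) (hx φ hφ G)

section Patch

variable {ι : Type*} [DecidableEq ι] {X : ι → Type*}

def patch (D : Finset ι) (x : ∀ j, ℕ → X j) (z : ∀ j, X j) (i : {j // j ∈ D} → ℕ) :
    ∀ j, X j :=
  fun j => if h : j ∈ D then x j (i ⟨j, h⟩) else z j

lemma patch_insert (D : Finset ι) (x : ∀ j, ℕ → X j) (z : ∀ j, X j) (j₀ : ι)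
    (i : {j // j ∈ insert j₀ D} → ℕ) :
    patch (insert j₀ D) x z i =
      Function.update (patch D x z (restrict₂ (π := fun _ => ℕ) (subset_insert j₀ D) i)) j₀
        (x j₀ (i ⟨j₀, mem_insert_self j₀ D⟩)) := by
  funext j
  rcases eq_or_ne j j₀ with rfl | hj
  · simp [patch]
  · by_cases hD : j ∈ D <;> simp [patch, hj, hD]

lemma patch_update_of_notMem {D : Finset ι} {j₀ : ι} (hj₀ : j₀ ∉ D) (x : ∀ j, ℕ → X j)
    (z : ∀ j, X j) (u : X j₀) (i : {j // j ∈ D} → ℕ) :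
    patch D x (Function.update z j₀ u) i = Function.update (patch D x z i) j₀ u := by
  funext j
  rcases eq_or_ne j j₀ with rfl | hj
  · simp [patch, hj₀]
  · by_cases hD : j ∈ D <;> simp [patch, hj, hD]

end Patch

section Summing

variable {ι : Type*} [DecidableEq ι] {X : ι → Type*} [∀ j, NormedAddCommGroup (X j)]
  [∀ j, NormedSpace ℝ (X j)] {Y : Type*} [NormedAddCommGroup Y] [NormedSpace ℝ Y]

def MultipleSummingIn (T : ContinuousMultilinearMap ℝ X Y) (D : Finset ι) (r : ℝ) (p : ι → ℝ) :
    Prop :=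
  ∃ κ > 0, ∀ z : ∀ j, X j, (∀ j ∉ D, ‖z j‖ ≤ 1) →
    ∀ x : ∀ j, ℕ → X j, (∀ j ∈ D, WeakNormLEOne (p j) (x j)) →
      ∀ F : Finset ({j // j ∈ D} → ℕ), ∑ i ∈ F, ‖T (patch D x z i)‖ ^ r ≤ κ ^ r

lemma sum_rpow_le_sum_sum_rpow_rpow {D : Finset ι} {j₀ : ι}
    (F : Finset ({j // j ∈ insert j₀ D} → ℕ)) (f : ({j // j ∈ D} → ℕ) → ℕ → ℝ)
    (hf : ∀ i₀ g, 0 ≤ f i₀ g) {r t : ℝ} (hr : 0 < r) (hrt : r ≤ t) :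
    ∑ i ∈ F,
        f (restrict₂ (π := fun _ => ℕ) (subset_insert j₀ D) i) (i ⟨j₀, mem_insert_self j₀ D⟩) ^ t ≤
      ∑ g ∈ F.image (· ⟨j₀, mem_insert_self j₀ D⟩),
        (∑ i₀ ∈ F.image (restrict₂ (π := fun _ => ℕ) (subset_insert j₀ D)), f i₀ g ^ r) ^
          (t / r) := by
  set split : ({j // j ∈ insert j₀ D} → ℕ) → ({j // j ∈ D} → ℕ) × ℕ :=
    fun i => (restrict₂ (π := fun _ => ℕ) (subset_insert j₀ D) i, i ⟨j₀, mem_insert_self j₀ D⟩)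
  have hsplit : Function.Injective split := fun i i' h => by
    funext ⟨j, hj⟩
    rcases mem_insert.mp hj with rfl | hj
    · exact congrArg Prod.snd h
    · exact congrFun (congrArg Prod.fst h) ⟨j, hj⟩
  calc ∑ i ∈ F, f (split i).1 (split i).2 ^ t
      = ∑ i₀g ∈ F.image split, f i₀g.1 i₀g.2 ^ t :=
        (sum_image (f := fun i₀g => f i₀g.1 i₀g.2 ^ t) fun i _ i' _ h => hsplit h).symm
    _ ≤ ∑ i₀g ∈ F.image (fun i => (split i).1) ×ˢ F.image (fun i => (split i).2),
          f i₀g.1 i₀g.2 ^ t :=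
        sum_le_sum_of_subset_of_nonneg
          (fun _ h => by
            obtain ⟨i, hi, rfl⟩ := mem_image.mp h
            exact mem_product.mpr ⟨mem_image_of_mem _ hi, mem_image_of_mem _ hi⟩)
          fun _ _ _ => Real.rpow_nonneg (hf _ _) t
    _ = ∑ g ∈ F.image (fun i => (split i).2), ∑ i₀ ∈ F.image (fun i => (split i).1),
          f i₀ g ^ t := by
        rw [sum_product, sum_comm]
    _ ≤ _ := sum_le_sum fun g _ =>
        Real.sum_rpow_le_sum_rpow_rpow _ (fun i₀ _ => hf i₀ g) hr hrt

theorem MultipleSummingIn.insert_of_hasCotype {T : ContinuousMultilinearMap ℝ X Y} {q r t : ℝ}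
    {p : ι → ℝ} {D : Finset ι} {j₀ : ι} (hY : HasCotype Y q) (hq : 2 ≤ q) (hqr : q ≤ r)
    (hj₀ : j₀ ∉ D) (hp : 1 ≤ p j₀) (ht : 0 < t) (hrt : 1 / t = 1 / r - (1 - 1 / p j₀))
    (hT : MultipleSummingIn T D r p) : MultipleSummingIn T (insert j₀ D) t p := by
  obtain ⟨C, hC, hcot⟩ := hY.exists_cotypeMomentBound hq hqr
  obtain ⟨κ, hκ, hT⟩ := hT
  have hr : 0 < r := by linarith
  have hrt' : r ≤ t := by
    refine (one_div_le_one_div ht hr).mp ?_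
    rw [hrt, sub_le_self_iff, sub_nonneg]
    exact div_le_one_of_le₀ hp (by linarith)
  refine ⟨C * κ, by positivity, fun z hz x hx F => ?_⟩
  set F₀ := F.image (restrict₂ (π := fun _ => ℕ) (subset_insert j₀ D))
  set G := F.image (· ⟨j₀, mem_insert_self j₀ D⟩)
  let L (i₀ : {j // j ∈ D} → ℕ) : X j₀ →L[ℝ] Y := T.toContinuousLinearMap (patch D x z i₀) j₀
  have hL : ∀ u : X j₀, ‖u‖ ≤ 1 → ∑ i₀ ∈ F₀, ‖L i₀ u‖ ^ r ≤ κ ^ r := fun u hu => by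
    have hzu : ∀ j ∉ D, ‖Function.update z j₀ u j‖ ≤ 1 := fun j hj => by
      rcases eq_or_ne j j₀ with rfl | hj'
      · simpa using hu
      · simpa [hj'] using hz j (by simp [hj', hj])
    simpa [L, patch_update_of_notMem hj₀] using
      hT _ hzu x (fun j hj => hx j (mem_insert_of_mem hj)) F₀
  calc ∑ i ∈ F, ‖T (patch (insert j₀ D) x z i)‖ ^ t
      ≤ ∑ g ∈ G, (∑ i₀ ∈ F₀, ‖L i₀ (x j₀ g)‖ ^ r) ^ (t / r) := by
        simpa [patch_insert, L] using sum_rpow_le_sum_sum_rpow_rpow F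
          (fun i₀ g => ‖L i₀ (x j₀ g)‖) (fun _ _ => norm_nonneg _) hr hrt'
    _ ≤ (C * κ) ^ t := by
      refine Real.sum_rpow_le_of_forall_weighted_le _
        (fun g => sum_nonneg fun _ _ => Real.rpow_nonneg (norm_nonneg _) r) hp hr ht hrt
        (by positivity) fun w hw hwb => ?_
      calc ∑ g ∈ G, w g ^ r * ∑ i₀ ∈ F₀, ‖L i₀ (x j₀ g)‖ ^ r
          = ∑ i₀ ∈ F₀, ∑ g ∈ G, ‖L i₀ (w g • x j₀ g)‖ ^ r := by
            simp_rw [mul_sum]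
            rw [sum_comm]
            refine sum_congr rfl fun i₀ _ => sum_congr rfl fun g _ => ?_
            rw [map_smul, norm_smul, Real.norm_of_nonneg (hw g),
              Real.mul_rpow (hw g) (norm_nonneg _)]
        _ ≤ (C * κ) ^ r := hcot.sum_sum_norm_rpow_le hC.le hκ.le L F₀ hL G _
            ((hx j₀ (mem_insert_self j₀ D)).norm_sum_smul_le_one hw hwb)

theorem MultipleSummingIn.union_of_hasCotype {T : ContinuousMultilinearMap ℝ X Y} {q r : ℝ}
    {p : ι → ℝ} {D E : Finset ι} (hY : HasCotype Y q) (hq : 2 ≤ q) (hqr : q ≤ r)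
    (hDE : Disjoint D E) (hp : ∀ j ∈ E, 1 ≤ p j) (hpos : 0 < 1 / r - ∑ j ∈ E, (1 - 1 / p j))
    (hT : MultipleSummingIn T D r p) :
    MultipleSummingIn T (D ∪ E) (1 / r - ∑ j ∈ E, (1 - 1 / p j))⁻¹ p := by
  induction E using Finset.induction_on with
  | empty => simpa using hT
  | insert j₀ E hj₀E ih =>
    simp only [disjoint_insert_right, forall_mem_insert] at hDE hp
    have hp' : ∀ j, 1 ≤ p j → 0 ≤ 1 - 1 / p j := fun j hj => by
      rw [sub_nonneg]; exact div_le_one_of_le₀ hj (by linarith)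
    rw [sum_insert hj₀E] at hpos ⊢
    have hposE : 0 < 1 / r - ∑ j ∈ E, (1 - 1 / p j) := by linarith [hp' j₀ hp.1]
    have hrE : q ≤ (1 / r - ∑ j ∈ E, (1 - 1 / p j))⁻¹ := by
      have hr : 0 < r := by linarith
      calc q ≤ (1 / r)⁻¹ := by rwa [one_div, inv_inv]
        _ ≤ _ := inv_anti₀ hposE (by linarith [sum_nonneg fun j hj => hp' j (hp.2 j hj)])
    rw [union_insert]
    refine (ih hDE.2 hp.2 hposE).insert_of_hasCotype hY hq hrE
      (by simp [hDE.1, hj₀E]) hp.1 ?_ ?_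
    · exact inv_pos.mpr hpos
    · rw [one_div (_⁻¹), one_div (_⁻¹), inv_inv, inv_inv]; ring

end Summing

section FinIndex

variable {m : ℕ} {X : Fin m → Type*} [∀ j, NormedAddCommGroup (X j)] [∀ j, NormedSpace ℝ (X j)]
  {Y : Type*} [NormedAddCommGroup Y] [NormedSpace ℝ Y] {T : ContinuousMultilinearMap ℝ X Y}

lemma CoordSumming.multipleSummingIn {D : Finset (Fin m)} {r p₀ : ℝ} {p : Fin m → ℝ}
    (hT : CoordSumming T D r p₀) (hp : ∀ j ∈ D, p j = p₀) : MultipleSummingIn T D r p := by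
  obtain ⟨κ, hκ, hT⟩ := hT
  exact ⟨κ, hκ, fun z hz x hx => hT z hz x fun j hj => hp j hj ▸ hx j hj⟩

lemma MultipleSummingIn.multipleSumming {r : ℝ} {p : Fin m → ℝ}
    (hT : MultipleSummingIn T univ r p) : MultipleSumming T r p := by
  obtain ⟨κ, hκ, hT⟩ := hT
  refine ⟨κ, hκ, fun x hx F => ?_⟩
  have hinj : Function.Injective (univ.restrict (π := fun _ : Fin m => ℕ)) := fun i i' h =>
    funext fun j => congrFun h ⟨j, mem_univ j⟩
  have hpatch : ∀ i, patch univ x 0 (univ.restrict i) = fun j => x j (i j) := fun i =>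
    funext fun j => by simp [patch]
  simpa [hpatch, sum_image fun i _ i' _ h => hinj h] using
    hT 0 (fun j hj => absurd (mem_univ j) hj) x (fun j _ => hx j) (F.image univ.restrict)

end FinIndex

lemma Finset.sdiff_eq_biUnion_erase {α β : Type*} [DecidableEq α] [Fintype α] [DecidableEq β]
    [Fintype β] (C : α → Finset β) (hdisj : ∀ k l, k ≠ l → Disjoint (C k) (C l))
    (hcover : ∀ j, ∃ k, j ∈ C k) (k : α) : univ \ C k = (univ.erase k).biUnion C := by
  ext j
  obtain ⟨l, hl⟩ := hcover j
  simp only [mem_sdiff, mem_univ, true_and, mem_biUnion, mem_erase, and_true]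
  refine ⟨fun hjk => ⟨l, fun hlk => hjk (hlk ▸ hl), hl⟩, ?_⟩
  rintro ⟨l', hl'k, hjl'⟩ hjk
  exact disjoint_left.mp (hdisj l' k hl'k) hjl' hjk

theorem stmt4_general {m n : ℕ}
    {X : Fin m → Type*} [∀ j, NormedAddCommGroup (X j)] [∀ j, NormedSpace ℝ (X j)]
    {Y : Type*} [NormedAddCommGroup Y] [NormedSpace ℝ Y]
    {q : ℝ} (hq : 2 ≤ q) (hY : HasCotype Y q)
    (C : Fin n → Finset (Fin m))
    (hCdisj : ∀ k l, k ≠ l → Disjoint (C k) (C l))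
    (hCcover : ∀ j : Fin m, ∃ k, j ∈ C k)
    (r p : Fin n → ℝ) (hp : ∀ k, 1 ≤ p k)
    (k : Fin n) (hk : q ≤ r k)
    (qq : Fin m → ℝ) (hqq : ∀ l, ∀ j ∈ C l, qq j = p l)
    (s : ℝ)
    (hs : 1 / s = 1 / r k - ∑ j ∈ Finset.univ.erase k, (C j).card * (1 - 1 / p j))
    (hspos : 0 < s)
    (T : ContinuousMultilinearMap ℝ X Y)
    (hT : ∀ l, CoordSumming T (C l) (r l) (p l)) :
    MultipleSumming T s qq := by
  have hqq1 : ∀ j, 1 ≤ qq j := fun j => by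
    obtain ⟨l, hl⟩ := hCcover j
    exact hqq l j hl ▸ hp l
  have hsum : ∑ j ∈ univ \ C k, (1 - 1 / qq j) =
      ∑ l ∈ univ.erase k, (C l).card * (1 - 1 / p l) := by
    rw [sdiff_eq_biUnion_erase C hCdisj hCcover, sum_biUnion fun l _ l' _ => hCdisj l l']
    refine sum_congr rfl fun l _ => ?_
    rw [sum_congr rfl fun j hj => by rw [hqq l j hj], sum_const, nsmul_eq_mul]
  have hfull := ((hT k).multipleSummingIn (hqq k)).union_of_hasCotype hY hq hk
    disjoint_sdiff (fun j _ => hqq1 j) (by rw [hsum, ← hs]; positivity)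
  rw [union_sdiff_of_subset (subset_univ _), hsum, ← hs, one_div, inv_inv] at hfull
  exact hfull.multipleSumming

/-- Theorem 2.3 (main theorem 3): if some `r_k ≥ q` (the cotype of `Y`), then coordinatewise
`(r_k, p_k)`-summability in the blocks of a partition implies multiple `(s, 𝐪)`-summability
with `1/s = 1/r_k − Σ_{j≠k} |C_j|/p_j*`. -/
theorem stmt4 {m n : ℕ} (hm : 2 ≤ m) (hn : 2 ≤ n)
    {X : Fin m → Type*} [∀ j, NormedAddCommGroup (X j)] [∀ j, NormedSpace ℝ (X j)]
    [∀ j, CompleteSpace (X j)]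
    {Y : Type*} [NormedAddCommGroup Y] [NormedSpace ℝ Y] [CompleteSpace Y]
    {q : ℝ} (hq : 2 ≤ q) (hY : HasCotype Y q)
    (C : Fin n → Finset (Fin m))
    (hCne : ∀ k, (C k).Nonempty)
    (hCdisj : ∀ k l, k ≠ l → Disjoint (C k) (C l))
    (hCcover : ∀ j : Fin m, ∃ k, j ∈ C k)
    (r p : Fin n → ℝ) (hr : ∀ k, 1 ≤ r k) (hp : ∀ k, 1 ≤ p k)
    (k : Fin n) (hk : q ≤ r k)
    (qq : Fin m → ℝ) (hqq : ∀ l, ∀ j ∈ C l, qq j = p l)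
    (s : ℝ)
    (hs : 1 / s = 1 / r k - ∑ j ∈ Finset.univ.erase k, (C j).card * (1 - 1 / p j))
    (hspos : 0 < s)
    (T : ContinuousMultilinearMap ℝ X Y)
    (hT : ∀ l, CoordSumming T (C l) (r l) (p l)) :
    MultipleSumming T s qq :=
  stmt4_general hq hY C hCdisj hCcover r p hp k hk qq hqq s hs hspos T hT
end

section
/- Let T : X_1×⋯×X_m → Y be an m-linear map between Banach spaces, let r,s ∈ [1,∞) and 𝐩,𝐪 ∈ [1,∞)^m. Assume that T is multiple (r,𝐩)-summing, that q_k ≥ p_k for all k = 1,…,m, and that 1/r − Σ_{j=1}^m 1/p_j + Σ_{j=1}^m 1/q_j > 0. Then T is multiple (s,𝐪)-summing, where s is defined by 1/s − Σ_{j=1}^m 1/q_j = 1/r − Σ_{j=1}^m 1/p_j. -/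
open Finset Real

lemma sum_rpow_mul_rpow_le_one {ι : Type*} {F : Finset ι} {u v : ι → ℝ}
    (hu : ∀ i ∈ F, 0 ≤ u i) (hv : ∀ i ∈ F, 0 ≤ v i)
    (hu₁ : ∑ i ∈ F, u i ≤ 1) (hv₁ : ∑ i ∈ F, v i ≤ 1)
    {α β : ℝ} (hα : 0 ≤ α) (hβ : 0 ≤ β) (hαβ : α + β = 1) :
    ∑ i ∈ F, u i ^ α * v i ^ β ≤ 1 :=
  calc ∑ i ∈ F, u i ^ α * v i ^ β
      ≤ ∑ i ∈ F, (α * u i + β * v i) :=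
        sum_le_sum fun i hi => geom_mean_le_arith_mean2_weighted hα hβ (hu i hi) (hv i hi) hαβ
    _ = α * ∑ i ∈ F, u i + β * ∑ i ∈ F, v i := by rw [sum_add_distrib, mul_sum, mul_sum]
    _ ≤ 1 := by nlinarith

theorem WeakNormLEOne.smul_rpow {X : Type*} [NormedAddCommGroup X] [NormedSpace ℝ X]
    {p q : ℝ} (hp : 0 < p) (hpq : p ≤ q) {x : ℕ → X} (hx : WeakNormLEOne q x)
    {t : ℕ → ℝ} (ht : ∀ k, 0 ≤ t k) (ht₁ : ∀ F : Finset ℕ, ∑ k ∈ F, t k ≤ 1) :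
    WeakNormLEOne p fun k => t k ^ (1 / p - 1 / q) • x k := by
  intro φ hφ F
  have hq : 0 < q := hp.trans_le hpq
  have he : 0 ≤ (1 / p - 1 / q) * p :=
    mul_nonneg (sub_nonneg.mpr (one_div_le_one_div_of_le hp hpq)) hp.le
  have hexp : (1 / p - 1 / q) * p + p / q = 1 := by field_simp; ring
  calc ∑ k ∈ F, |φ (t k ^ (1 / p - 1 / q) • x k)| ^ p
      = ∑ k ∈ F, t k ^ ((1 / p - 1 / q) * p) * (|φ (x k)| ^ q) ^ (p / q) := by
        refine sum_congr rfl fun k _ => ?_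
        rw [map_smul, smul_eq_mul, abs_mul, abs_of_nonneg (rpow_nonneg (ht k) _),
          mul_rpow (rpow_nonneg (ht k) _) (abs_nonneg _), ← rpow_mul (ht k),
          ← rpow_mul (abs_nonneg _), mul_div_cancel₀ _ hq.ne']
    _ ≤ 1 :=
        sum_rpow_mul_rpow_le_one (fun k _ => ht k) (fun k _ => rpow_nonneg (abs_nonneg _) _)
          (ht₁ F) (hx φ hφ F) he (div_nonneg hp.le hq.le) hexp

section Marginal

variable {ι α : Type*} [DecidableEq α]

def marginal (F : Finset (ι → α)) (b : (ι → α) → ℝ) (j : ι) (k : α) : ℝ :=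
  ∑ i ∈ F with i j = k, b i

variable {F : Finset (ι → α)} {b : (ι → α) → ℝ}

lemma marginal_nonneg (hb : ∀ i, 0 ≤ b i) (j : ι) (k : α) : 0 ≤ marginal F b j k :=
  sum_nonneg fun i _ => hb i

lemma le_marginal (hb : ∀ i, 0 ≤ b i) {i : ι → α} (hi : i ∈ F) (j : ι) :
    b i ≤ marginal F b j (i j) :=
  single_le_sum (fun i' _ => hb i') (mem_filter.mpr ⟨hi, rfl⟩)

lemma sum_marginal_le (hb : ∀ i, 0 ≤ b i) (j : ι) (K : Finset α) :
    ∑ k ∈ K, marginal F b j k ≤ ∑ i ∈ F, b i := by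
  unfold marginal
  rw [sum_fiberwise_eq_sum_filter F K (fun i => i j) b]
  exact sum_le_sum_of_subset_of_nonneg (filter_subset _ _) fun i _ _ => hb i

end Marginal

lemma le_prod_rpow_mul_rpow {ι : Type*} (J : Finset ι) {b d : ℝ} (hb : 0 ≤ b)
    {t c : ι → ℝ} (hbt : ∀ j ∈ J, b ≤ t j) (hc : ∀ j ∈ J, 0 ≤ c j)
    (hcd : ∑ j ∈ J, c j + d = 1) :
    b ≤ (∏ j ∈ J, t j ^ c j) * b ^ d := by
  rcases hb.eq_or_lt with rfl | hb
  · exact mul_nonneg (prod_nonneg fun j hj => rpow_nonneg (hbt j hj) _) (rpow_nonneg le_rfl _)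
  calc b = b ^ (∑ j ∈ J, c j + d) := by rw [hcd, rpow_one]
    _ = (∏ j ∈ J, b ^ c j) * b ^ d := by rw [rpow_add hb, rpow_sum_of_pos hb]
    _ ≤ (∏ j ∈ J, t j ^ c j) * b ^ d := by
        gcongr with j hj
        exacts [hc j hj, hbt j hj]

theorem rpow_sum_rpow_le_sum_prod_marginal_rpow {ι α : Type*} [Fintype ι] [DecidableEq α]
    (F : Finset (ι → α)) {a : (ι → α) → ℝ} (ha : ∀ i, 0 ≤ a i) {r s : ℝ} (hr : 0 < r)
    (hs : 0 < s) {e : ι → ℝ} (he : ∀ j, 0 ≤ e j) (hres : ∑ j, e j + 1 / s = 1 / r) :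
    (∑ i ∈ F, a i ^ s) ^ (r / s) ≤ ∑ i ∈ F,
      ((∏ j, marginal F (fun i => a i ^ s / ∑ i ∈ F, a i ^ s) j (i j) ^ e j) * a i) ^ r := by
  set S := ∑ i ∈ F, a i ^ s
  set b : (ι → α) → ℝ := fun i => a i ^ s / S
  have hS : 0 ≤ S := sum_nonneg fun i _ => rpow_nonneg (ha i) s
  have hb : ∀ i, 0 ≤ b i := fun i => div_nonneg (rpow_nonneg (ha i) s) hS
  rcases hS.eq_or_lt with hS | hS
  · rw [← hS, zero_rpow (div_pos hr hs).ne']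
    exact sum_nonneg fun i _ => rpow_nonneg (mul_nonneg (prod_nonneg fun j _ =>
      rpow_nonneg (marginal_nonneg hb _ _) _) (ha i)) r
  have hexp : ∑ j, e j * r + r / s = 1 := by
    rw [← sum_mul, div_eq_mul_one_div r s, mul_comm r, ← add_mul, hres, one_div_mul_cancel hr.ne']
  calc S ^ (r / s) = ∑ i ∈ F, b i * S ^ (r / s) := by
        rw [← sum_mul, ← sum_div, div_self hS.ne', one_mul]
    _ ≤ ∑ i ∈ F, (∏ j, marginal F b j (i j) ^ (e j * r)) * b i ^ (r / s) * S ^ (r / s) := by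
        refine sum_le_sum fun i hi => mul_le_mul_of_nonneg_right ?_ (rpow_nonneg hS.le _)
        exact le_prod_rpow_mul_rpow univ (hb i) (fun j _ => le_marginal hb hi j)
          (fun j _ => mul_nonneg (he j) hr.le) hexp
    _ = ∑ i ∈ F, ((∏ j, marginal F b j (i j) ^ e j) * a i) ^ r := by
        refine sum_congr rfl fun i _ => ?_
        have hm : ∀ j, 0 ≤ marginal F b j (i j) := fun j => marginal_nonneg hb j (i j)
        rw [mul_assoc, ← mul_rpow (hb i) hS.le, div_mul_cancel₀ _ hS.ne', ← rpow_mul (ha i),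
          mul_div_cancel₀ _ hs.ne', mul_rpow (prod_nonneg fun j _ => rpow_nonneg (hm j) _) (ha i),
          ← finsetProd_rpow _ _ fun j _ => rpow_nonneg (hm j) _]
        simp only [← rpow_mul (hm _)]

lemma le_rpow_of_rpow_div_le {S C r s : ℝ} (hS : 0 ≤ S) (hC : 0 ≤ C) (hr : 0 < r) (hs : 0 < s)
    (h : S ^ (r / s) ≤ C ^ r) : S ≤ C ^ s :=
  calc S = (S ^ (r / s)) ^ (s / r) := by
        rw [← rpow_mul hS, show r / s * (s / r) = 1 by field_simp, rpow_one]
    _ ≤ (C ^ r) ^ (s / r) := rpow_le_rpow (rpow_nonneg hS _) h (div_nonneg hs.le hr.le)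
    _ = C ^ s := by rw [← rpow_mul hC, mul_div_cancel₀ _ hr.ne']

theorem stmt10_general {m : ℕ} {X : Fin m → Type*} [∀ j, NormedAddCommGroup (X j)]
    [∀ j, NormedSpace ℝ (X j)]
    {Y : Type*} [NormedAddCommGroup Y] [NormedSpace ℝ Y]
    (T : ContinuousMultilinearMap ℝ X Y)
    (r s : ℝ) (hr : 1 ≤ r) (hs1 : 1 ≤ s)
    (p q : Fin m → ℝ) (hp : ∀ k, 1 ≤ p k)
    (hpq : ∀ k, p k ≤ q k)
    (hT : MultipleSumming T r p)
    (hs : 1 / s - ∑ j, 1 / q j = 1 / r - ∑ j, 1 / p j) :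
    MultipleSumming T s q := by
  obtain ⟨C, hC, hTC⟩ := hT
  refine ⟨C, hC, fun x hx F => ?_⟩
  have hr0 : 0 < r := one_pos.trans_le hr
  have hs0 : 0 < s := one_pos.trans_le hs1
  have hp0 : ∀ k, 0 < p k := fun k => one_pos.trans_le (hp k)
  set a : (Fin m → ℕ) → ℝ := fun i => ‖T fun j => x j (i j)‖
  set b : (Fin m → ℕ) → ℝ := fun i => a i ^ s / ∑ i ∈ F, a i ^ s
  set σ : ∀ j, ℕ → ℝ := fun j k => marginal F b j k ^ (1 / p j - 1 / q j)
  have hb : ∀ i, 0 ≤ b i := fun i => div_nonneg (rpow_nonneg (norm_nonneg _) s)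
    (sum_nonneg fun i _ => rpow_nonneg (norm_nonneg _) s)
  have hb₁ : ∑ i ∈ F, b i ≤ 1 := by rw [← sum_div]; exact div_self_le_one _
  have hy : ∀ j, WeakNormLEOne (p j) fun k => σ j k • x j k := fun j =>
    (hx j).smul_rpow (hp0 j) (hpq j) (marginal_nonneg hb j)
      fun K => (sum_marginal_le hb j K).trans hb₁
  have hTy : ∀ i, ‖T fun j => σ j (i j) • x j (i j)‖ = (∏ j, σ j (i j)) * a i := fun i => by
    rw [T.map_smul_univ, norm_smul, norm_of_nonneg
      (prod_nonneg fun j _ => rpow_nonneg (marginal_nonneg hb j _) _)]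
  have hmain := rpow_sum_rpow_le_sum_prod_marginal_rpow F (a := a) (e := fun j => 1 / p j - 1 / q j)
    (fun i => norm_nonneg _) hr0 hs0
    (fun j => sub_nonneg.mpr (one_div_le_one_div_of_le (hp0 j) (hpq j)))
    (by rw [sum_sub_distrib]; linarith)
  refine le_rpow_of_rpow_div_le (sum_nonneg fun i _ => rpow_nonneg (norm_nonneg _) s) hC.le
    hr0 hs0 (hmain.trans ?_)
  simpa only [hTy] using hTC _ hy F

/-- Theorem 1.2 (inclusion theorem): if `T` is multiple `(r, 𝐩)`-summing, `q_k ≥ p_k` for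
all `k` and `1/r − Σ 1/p_j + Σ 1/q_j > 0`, then `T` is multiple `(s, 𝐪)`-summing where
`1/s − Σ 1/q_j = 1/r − Σ 1/p_j`. -/
theorem stmt10 {m : ℕ} (hm : 1 ≤ m) {X : Fin m → Type*} [∀ j, NormedAddCommGroup (X j)]
    [∀ j, NormedSpace ℝ (X j)] [∀ j, CompleteSpace (X j)]
    {Y : Type*} [NormedAddCommGroup Y] [NormedSpace ℝ Y] [CompleteSpace Y]
    (T : ContinuousMultilinearMap ℝ X Y)
    (r s : ℝ) (hr : 1 ≤ r) (hs1 : 1 ≤ s)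
    (p q : Fin m → ℝ) (hp : ∀ k, 1 ≤ p k) (hq : ∀ k, 1 ≤ q k)
    (hpq : ∀ k, p k ≤ q k)
    (hT : MultipleSumming T r p)
    (hpos : 0 < 1 / r - ∑ j, 1 / p j + ∑ j, 1 / q j)
    (hs : 1 / s - ∑ j, 1 / q j = 1 / r - ∑ j, 1 / p j) :
    MultipleSumming T s q :=
  stmt10_general T r s hr hs1 p q hp hpq hT hs
end

section
/- Let m ≥ 1, let 1 ≤ p_1,…,p_m ≤ ∞, and let A : ℓ_{p_1}×⋯×ℓ_{p_m} → ℂ be a bounded m-linear form that is non-negative, i.e. A(e_{i_1},…,e_{i_m}) ≥ 0 for every multi-index 𝐢 ∈ ℕ^m. If ρ is defined by 1/ρ = 1 − Σ_{j=1}^m 1/p_j and 1/ρ > 0, then (Σ_{𝐢∈ℕ^m} A(e_{i_1},…,e_{i_m})^ρ)^{1/ρ} ≤ ‖A‖. -/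
/-!
Write `a i = A(e_{i_1}, …, e_{i_m}) ≥ 0`, `S = ∑_{i ∈ F} a i ^ ρ`, and let `T_j(k)` be the part of
`S` coming from multi-indices with `i_j = k`. Test `A` on `x_j = ∑_k (T_j(k) / S)^{1/p_j} e_k`:
since `∑_k T_j(k) = S`, each `x_j` lies in the unit ball of `ℓ_{p_j}`. Expanding multilinearly
and dropping the (non-negative) terms outside `F`,
`‖A‖ ≥ A(x) ≥ ∑_{i ∈ F} ∏_j (T_j(i_j)/S)^{1/p_j} a i`.
As `T_j(i_j) ≥ a i ^ ρ` and `∑_j 1/p_j = 1 - 1/ρ`, each summand is at least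
`(a i ^ ρ / S)^{1 - 1/ρ} a i = a i ^ ρ / S^{1 - 1/ρ}`, and these add up to `S^{1/ρ}`.
-/

open scoped ENNReal
open Finset

theorem MultilinearMap.map_sum_smul_finset {R ι α : Type*} [CommSemiring R] [Fintype ι]
    [DecidableEq ι] {M : ι → Type*} {N : Type*} [∀ j, AddCommMonoid (M j)] [AddCommMonoid N]
    [∀ j, Module R (M j)] [Module R N] (f : MultilinearMap R M N) (K : ι → Finset α)
    (c : ι → α → R) (v : ∀ j, α → M j) :
    f (fun j => ∑ k ∈ K j, c j k • v j k) =
      ∑ r ∈ Fintype.piFinset K, (∏ j, c j (r j)) • f (fun j => v j (r j)) := by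
  rw [f.map_sum_finset]
  exact sum_congr rfl fun r _ => f.map_smul_univ _ _

theorem lp.norm_sum_single_rpow_inv_le_one {α : Type*} [DecidableEq α] {q : ℝ≥0∞} [Fact (1 ≤ q)]
    (K : Finset α) (w : α → ℝ) (hw0 : ∀ k, 0 ≤ w k) (hw : ∑ k ∈ K, w k ≤ 1) :
    ‖∑ k ∈ K, lp.single q k ((w k ^ (q⁻¹).toReal : ℝ) : ℂ)‖ ≤ 1 := by
  rcases eq_or_ne q ∞ with rfl | hq
  · refine lp.norm_le_of_forall_le zero_le_one fun k' => ?_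
    rw [lp.coeFn_sum, Finset.sum_apply]
    simp only [lp.single_apply, Pi.single_apply, Finset.sum_ite_eq, ENNReal.inv_top,
      ENNReal.toReal_zero, Real.rpow_zero]
    split_ifs <;> simp
  · have hq0 : 0 < q.toReal :=
      ENNReal.toReal_pos (zero_lt_one.trans_le Fact.out).ne' hq
    rw [← Real.rpow_le_rpow_iff (norm_nonneg _) zero_le_one hq0, Real.one_rpow,
      lp.norm_sum_single hq0]
    calc ∑ k ∈ K, ‖((w k ^ (q⁻¹).toReal : ℝ) : ℂ)‖ ^ q.toReal = ∑ k ∈ K, w k := by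
          refine sum_congr rfl fun k _ => ?_
          rw [Complex.norm_real, Real.norm_of_nonneg (Real.rpow_nonneg (hw0 k) _),
            ENNReal.toReal_inv, ← Real.rpow_mul (hw0 k), inv_mul_cancel₀ hq0.ne', Real.rpow_one]
      _ ≤ 1 := hw

theorem Real.rpow_div_rpow_one_sub_one_div {a S ρ : ℝ} (ha : 0 ≤ a) (hS : 0 ≤ S) (hρ : ρ ≠ 0) :
    a ^ ρ / S ^ (1 - 1 / ρ) = (a ^ ρ / S) ^ (1 - 1 / ρ) * a := by
  rw [Real.div_rpow (Real.rpow_nonneg ha ρ) hS, ← Real.rpow_mul ha, div_mul_eq_mul_div]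
  congr 1
  calc a ^ ρ = a ^ (ρ * (1 - 1 / ρ) + 1) := by field_simp; ring_nf
    _ = a ^ (ρ * (1 - 1 / ρ)) * a := by
        rw [Real.rpow_add' ha (by field_simp; simpa using hρ), Real.rpow_one]

theorem rpow_one_div_sum_le_sum_prod_fiber_mul {ι α : Type*} [Fintype ι] [DecidableEq α]
    (F : Finset (ι → α)) (a : (ι → α) → ℝ) (ha : ∀ i, 0 ≤ a i) {ρ : ℝ} (hρ : 0 < ρ)
    (s : ι → ℝ) (hs0 : ∀ j, 0 ≤ s j) (hs : ∑ j, s j = 1 - 1 / ρ) :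
    (∑ i ∈ F, a i ^ ρ) ^ (1 / ρ) ≤
      ∑ i ∈ F, (∏ j, ((∑ i' ∈ F with i' j = i j, a i' ^ ρ) / ∑ i' ∈ F, a i' ^ ρ) ^ s j) * a i := by
  set S := ∑ i ∈ F, a i ^ ρ with hSdef
  have hρa : ∀ i, 0 ≤ a i ^ ρ := fun i => Real.rpow_nonneg (ha i) ρ
  have hS0 : 0 ≤ S := sum_nonneg fun i _ => hρa i
  rcases hS0.eq_or_lt with hS | hS
  · rw [← hS, Real.zero_rpow (one_div_pos.mpr hρ).ne']
    refine sum_nonneg fun i _ => mul_nonneg (prod_nonneg fun j _ => ?_) (ha i)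
    exact Real.rpow_nonneg (div_nonneg (sum_nonneg fun i _ => hρa i) le_rfl) _
  have hSsplit : S ^ (1 / ρ) = ∑ i ∈ F, a i ^ ρ / S ^ (1 - 1 / ρ) := by
    rw [← sum_div, ← hSdef, eq_div_iff (Real.rpow_pos_of_pos hS _).ne', ← Real.rpow_add hS]
    norm_num
  rw [hSsplit]
  refine sum_le_sum fun i hi => ?_
  rw [Real.rpow_div_rpow_one_sub_one_div (ha i) hS.le hρ.ne', ← hs,
    Real.rpow_sum_of_nonneg (div_nonneg (hρa i) hS.le) fun j _ => hs0 j]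
  refine mul_le_mul_of_nonneg_right (prod_le_prod (fun j _ => ?_) fun j _ => ?_) (ha i)
  · exact Real.rpow_nonneg (div_nonneg (hρa i) hS.le) _
  · refine Real.rpow_le_rpow (div_nonneg (hρa i) hS.le) ?_ (hs0 j)
    exact div_le_div_of_nonneg_right
      (single_le_sum (f := fun i' => a i' ^ ρ) (fun i' _ => hρa i') (mem_filter.mpr ⟨hi, rfl⟩))
      hS.le

theorem ContinuousMultilinearMap.re_apply_sum_lp_single {ι α : Type*} [Fintype ι] [DecidableEq ι]
    [DecidableEq α] {p : ι → ℝ≥0∞} [∀ j, Fact (1 ≤ p j)]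
    (A : ContinuousMultilinearMap ℂ (fun j => lp (fun _ : α => ℂ) (p j)) ℂ) (K : ι → Finset α)
    (c : ι → α → ℝ) :
    (A fun j => ∑ k ∈ K j, lp.single (p j) k (c j k : ℂ)).re =
      ∑ r ∈ Fintype.piFinset K, (∏ j, c j (r j)) * (A fun j => lp.single (p j) (r j) 1).re := by
  have hsmul : (fun j => ∑ k ∈ K j, lp.single (p j) k (c j k : ℂ)) =
      fun j => ∑ k ∈ K j, (c j k : ℂ) • lp.single (p j) k (1 : ℂ) := by
    simp only [← lp.single_smul, smul_eq_mul, mul_one]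
  rw [hsmul, ← A.coe_coe, A.toMultilinearMap.map_sum_smul_finset, Complex.re_sum]
  refine sum_congr rfl fun r _ => ?_
  rw [smul_eq_mul, ← Complex.ofReal_prod, Complex.re_ofReal_mul]

theorem stmt11_general {m : ℕ} (p : Fin m → ℝ≥0∞) [∀ j, Fact (1 ≤ p j)]
    (A : ContinuousMultilinearMap ℂ (fun j : Fin m => lp (fun _ : ℕ => ℂ) (p j)) ℂ)
    (hA : ∀ i : Fin m → ℕ,
      0 ≤ (A (fun j => lp.single (p j) (i j) (1 : ℂ))).re ∧
        (A (fun j => lp.single (p j) (i j) (1 : ℂ))).im = 0)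
    (ρ : ℝ) (hρ : 1 / ρ = 1 - ∑ j, ((p j)⁻¹).toReal) (hρpos : 0 < 1 / ρ) :
    ∀ F : Finset (Fin m → ℕ),
      (∑ i ∈ F, (A (fun j => lp.single (p j) (i j) (1 : ℂ))).re ^ ρ) ^ (1 / ρ) ≤ ‖A‖ := by
  intro F
  set a : (Fin m → ℕ) → ℝ := fun i => (A (fun j => lp.single (p j) (i j) (1 : ℂ))).re
  have ha : ∀ i, 0 ≤ a i := fun i => (hA i).1
  have hρa : ∀ i, 0 ≤ a i ^ ρ := fun i => Real.rpow_nonneg (ha i) ρ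
  set S := ∑ i ∈ F, a i ^ ρ
  set w : Fin m → ℕ → ℝ := fun j k => (∑ i ∈ F with i j = k, a i ^ ρ) / S
  have hw0 : ∀ j k, 0 ≤ w j k := fun j k =>
    div_nonneg (sum_nonneg fun i _ => hρa i) (sum_nonneg fun i _ => hρa i)
  set K : Fin m → Finset ℕ := fun j => F.image (· j)
  set x : ∀ j, lp (fun _ : ℕ => ℂ) (p j) :=
    fun j => ∑ k ∈ K j, lp.single (p j) k ((w j k ^ ((p j)⁻¹).toReal : ℝ) : ℂ)
  have hx : ∀ j, ‖x j‖ ≤ 1 := fun j => by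
    refine lp.norm_sum_single_rpow_inv_le_one _ _ (hw0 j) ?_
    rw [← sum_div, sum_fiberwise_of_maps_to fun i hi => mem_image_of_mem _ hi]
    exact div_self_le_one S
  calc S ^ (1 / ρ) ≤ ∑ i ∈ F, (∏ j, w j (i j) ^ ((p j)⁻¹).toReal) * a i :=
        rpow_one_div_sum_le_sum_prod_fiber_mul F a ha (one_div_pos.mp hρpos) _
          (fun j => ENNReal.toReal_nonneg) (by linarith)
    _ ≤ ∑ r ∈ Fintype.piFinset K, (∏ j, w j (r j) ^ ((p j)⁻¹).toReal) * a r :=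
        sum_le_sum_of_subset_of_nonneg
          (fun i hi => Fintype.mem_piFinset.mpr fun j => mem_image_of_mem _ hi)
          fun r _ _ => mul_nonneg (prod_nonneg fun j _ => Real.rpow_nonneg (hw0 j _) _) (ha r)
    _ = (A x).re := (A.re_apply_sum_lp_single K fun j k => w j k ^ ((p j)⁻¹).toReal).symm
    _ ≤ ‖A x‖ := Complex.re_le_norm _
    _ ≤ ‖A‖ * ∏ j, ‖x j‖ := A.le_opNorm x
    _ ≤ ‖A‖ := mul_le_of_le_one_right (norm_nonneg _)
        (prod_le_one (fun j _ => norm_nonneg _) fun j _ => hx j)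

/-- Proposition 3.1 (non-negative Praciano-Pereira): if `A` is a bounded `m`-linear form on
`ℓ_{p₁} × ⋯ × ℓ_{p_m}` with `A(e_𝐢) ≥ 0` for all multi-indices `𝐢`, then
`(Σ_𝐢 A(e_𝐢)^ρ)^{1/ρ} ≤ ‖A‖` where `1/ρ = 1 − Σ_j 1/p_j > 0`. -/
theorem stmt11 {m : ℕ} (hm : 1 ≤ m) (p : Fin m → ℝ≥0∞) [∀ j, Fact (1 ≤ p j)]
    (A : ContinuousMultilinearMap ℂ (fun j : Fin m => lp (fun _ : ℕ => ℂ) (p j)) ℂ)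
    (hA : ∀ i : Fin m → ℕ,
      0 ≤ (A (fun j => lp.single (p j) (i j) (1 : ℂ))).re ∧
        (A (fun j => lp.single (p j) (i j) (1 : ℂ))).im = 0)
    (ρ : ℝ) (hρ : 1 / ρ = 1 - ∑ j, ((p j)⁻¹).toReal) (hρpos : 0 < 1 / ρ) :
    ∀ F : Finset (Fin m → ℕ),
      (∑ i ∈ F, (A (fun j => lp.single (p j) (i j) (1 : ℂ))).re ^ ρ) ^ (1 / ρ) ≤ ‖A‖ :=
  stmt11_general p A hA ρ hρ hρpos
end

section
/- Let T : X_1×⋯×X_m → Y be an m-linear map between Banach spaces with Y of cotype q. Let 𝐪 ∈ [1,∞)^m and let C ⊂ {1,…,m}; define 𝐭 ∈ [1,∞)^C by t_k = q_k for k ∈ C. Let s,r ∈ [1,∞) satisfy 1/r = 1/s + Σ_{j∈C̄} 1/q_j*, with r ≥ q and s ≥ q_k for all k ∈ {1,…,m}. Then there exists κ > 0 (independent of T) such that π^mult_{s,𝐪}(T) ≤ κ · sup{ π^mult_{r,𝐭}(T^C(z)) : ‖z‖_{X^{C̄}} ≤ 1 }. -/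
/-- `B` is an admissible constant for the multiple `(r, 𝐩)`-summability of `T`; the least
such `B ≥ 0` is `π^mult_{r,𝐩}(T)`. -/
def MultSummingWith {m : ℕ} {X : Fin m → Type*} [∀ j, NormedAddCommGroup (X j)]
    [∀ j, NormedSpace ℝ (X j)] {Y : Type*} [NormedAddCommGroup Y] [NormedSpace ℝ Y]
    (T : ContinuousMultilinearMap ℝ X Y) (r : ℝ) (p : Fin m → ℝ) (B : ℝ) : Prop :=
  ∀ x : ∀ j, ℕ → X j, (∀ j, WeakNormLEOne (p j) (x j)) →
    ∀ F : Finset (Fin m → ℕ), ∑ i ∈ F, ‖T (fun j => x j (i j))‖ ^ r ≤ B ^ r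

/-- `B` is an admissible constant for the multiple `(r, 𝐭)`-summability of the restricted map
`T^C(z) : x ↦ T(x, z)` (a `|C|`-linear map); the least such `B ≥ 0` is
`π^mult_{r,𝐭}(T^C(z))`. -/
def CoordSummingWith {m : ℕ} {X : Fin m → Type*} [∀ j, NormedAddCommGroup (X j)]
    [∀ j, NormedSpace ℝ (X j)] {Y : Type*} [NormedAddCommGroup Y] [NormedSpace ℝ Y]
    (T : ContinuousMultilinearMap ℝ X Y) (C : Finset (Fin m)) (r : ℝ) (t : Fin m → ℝ)
    (z : ∀ j, X j) (B : ℝ) : Prop :=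
  ∀ x : ∀ j, ℕ → X j, (∀ j ∈ C, WeakNormLEOne (t j) (x j)) →
    ∀ F : Finset ({j : Fin m // j ∈ C} → ℕ),
      ∑ i ∈ F, ‖T (fun j => if h : j ∈ C then x j (i ⟨j, h⟩) else z j)‖ ^ r ≤ B ^ r

/-! Adding the coordinates outside `C` one at a time, it suffices to pass from `C'` to
`C' ∪ {j}`, where the exponent grows from `r` to `s` with `1/s = 1/r - 1/q_j*`. Freezing the
other coordinates turns `T` into a family of linear maps `G_v` on `X_j` whose `ℓ^r`-sums are
bounded by `B^r` on the unit ball. If `Σ_w c_w |φ (x_w)| ≤ 1` for all `‖φ‖ ≤ 1`, every signed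
combination `Σ_w ±c_w x_w` lies in that ball, so cotype `q ≤ r` (averaged over the signs, using
convexity of `t ↦ t^(r/2)`) gives `Σ_w c_w^r L_w ≤ (C_q B)^r` with `L_w = Σ_v ‖G_v x_w‖^r`. By
Hölder every `c` in the unit ball of `ℓ^(q_j*)` is such a weight, and `ℓ^(s/r)`-duality turns
these bounds into `Σ_w L_w^(s/r) ≤ (C_q B)^s`, which dominates the `ℓ^s`-sum over the new
multi-indices. Each step costs a factor `C_q`, so `κ = C_q^|C̄|`. -/

open Finset

theorem Real.sum_rpow_le_rpow_sum_s14 {ι : Type*} (s : Finset ι) {f : ι → ℝ}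
    (hf : ∀ i ∈ s, 0 ≤ f i) {e : ℝ} (he : 1 ≤ e) :
    ∑ i ∈ s, f i ^ e ≤ (∑ i ∈ s, f i) ^ e := by
  have hpow : ∀ x : ℝ, 0 ≤ x → x ^ e = x * x ^ (e - 1) := fun x hx => by
    rw [← Real.rpow_one_add' hx (by linarith), add_sub_cancel]
  calc ∑ i ∈ s, f i ^ e = ∑ i ∈ s, f i * f i ^ (e - 1) :=
        sum_congr rfl fun i hi => hpow _ (hf i hi)
    _ ≤ ∑ i ∈ s, f i * (∑ j ∈ s, f j) ^ (e - 1) := sum_le_sum fun i hi =>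
        mul_le_mul_of_nonneg_left
          (Real.rpow_le_rpow (hf i hi) (single_le_sum hf hi) (by linarith)) (hf i hi)
    _ = (∑ i ∈ s, f i) ^ e := by rw [← sum_mul, hpow _ (sum_nonneg hf)]

theorem Real.sum_rpow_le_of_forall_sum_mul_le {ι : Type*} (s : Finset ι) {f : ι → ℝ}
    (hf : ∀ i ∈ s, 0 ≤ f i) {p q M : ℝ} (hpq : p.HolderConjugate q)
    (h : ∀ g : ι → ℝ, (∀ i ∈ s, 0 ≤ g i) → ∑ i ∈ s, g i ^ q ≤ 1 → ∑ i ∈ s, f i * g i ≤ M) :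
    ∑ i ∈ s, f i ^ p ≤ M ^ p := by
  obtain ⟨g, hg, hfg⟩ := (NNReal.isGreatest_Lp s (fun i => (f i).toNNReal) hpq).1
  have hnorm : (∑ i ∈ s, f i ^ p) ^ (1 / p) = ∑ i ∈ s, f i * g i := by
    have := congrArg ((↑) : NNReal → ℝ) hfg
    push_cast at this
    have hcoe : ∀ i ∈ s, ((f i).toNNReal : ℝ) ^ p = f i ^ p := fun i hi => by
      rw [Real.coe_toNNReal _ (hf i hi)]
    have hcoe' : ∀ i ∈ s, ((f i).toNNReal : ℝ) * g i = f i * g i := fun i hi => by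
      rw [Real.coe_toNNReal _ (hf i hi)]
    rw [sum_congr rfl hcoe, sum_congr rfl hcoe'] at this
    exact this.symm
  have hS : 0 ≤ ∑ i ∈ s, f i ^ p := sum_nonneg fun i hi => Real.rpow_nonneg (hf i hi) _
  calc ∑ i ∈ s, f i ^ p = ((∑ i ∈ s, f i ^ p) ^ (1 / p)) ^ p := by
        rw [← Real.rpow_mul hS, one_div_mul_cancel hpq.ne_zero, Real.rpow_one]
    _ ≤ M ^ p := Real.rpow_le_rpow (Real.rpow_nonneg hS _)
        (hnorm ▸ h (fun i => g i) (fun i _ => (g i).2) (by exact_mod_cast hg)) hpq.nonneg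

theorem Real.sum_rpow_le_sum_rpow_sum_of_injOn {α β γ : Type*} [DecidableEq β] [DecidableEq γ]
    (F : Finset α) (f : α → β) (g : α → γ) (hfg : Set.InjOn (fun a => (f a, g a)) F)
    (h : β → γ → ℝ) (h0 : ∀ b c, 0 ≤ h b c) {e : ℝ} (he : 1 ≤ e) :
    ∑ a ∈ F, h (f a) (g a) ^ e ≤ ∑ b ∈ F.image f, (∑ c ∈ F.image g, h b c) ^ e := by
  have he0 : 0 ≤ e := by linarith
  calc ∑ a ∈ F, h (f a) (g a) ^ e
      = ∑ bc ∈ F.image (fun a => (f a, g a)), h bc.1 bc.2 ^ e :=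
        (sum_image (f := fun bc => h bc.1 bc.2 ^ e) hfg).symm
    _ ≤ ∑ bc ∈ F.image f ×ˢ F.image g, h bc.1 bc.2 ^ e :=
        sum_le_sum_of_subset_of_nonneg
          (fun bc hbc => by
            obtain ⟨a, ha, rfl⟩ := mem_image.1 hbc
            exact mem_product.2 ⟨mem_image_of_mem f ha, mem_image_of_mem g ha⟩)
          fun bc _ _ => by have := h0 bc.1 bc.2; positivity
    _ = ∑ b ∈ F.image f, ∑ c ∈ F.image g, h b c ^ e := sum_product _ _ _
    _ ≤ ∑ b ∈ F.image f, (∑ c ∈ F.image g, h b c) ^ e :=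
        sum_le_sum fun b _ => Real.sum_rpow_le_rpow_sum_s14 _ (fun c _ => h0 b c) he

def HasCotypeWith (Y : Type*) [NormedAddCommGroup Y] [NormedSpace ℝ Y] (q Cq : ℝ) : Prop :=
  ∀ (κ : Type) [Fintype κ] [DecidableEq κ] (y : κ → Y), (∑ k, ‖y k‖ ^ q) ^ (1 / q) ≤
    Cq * ((∑ ε : κ → Bool, ‖∑ k, (if ε k then (1 : ℝ) else -1) • y k‖ ^ 2) /
      2 ^ Fintype.card κ) ^ ((1 : ℝ) / 2)

section Cotype

variable {Y : Type*} [NormedAddCommGroup Y] [NormedSpace ℝ Y] {q Cq : ℝ}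

theorem HasCotype.exists_hasCotypeWith (h : HasCotype Y q) : ∃ Cq > 0, HasCotypeWith Y q Cq := by
  obtain ⟨Cq, hCq, hY⟩ := h
  refine ⟨Cq, hCq, fun κ _ _ y => ?_⟩
  let e := Fintype.equivFin κ
  have hnorms : ∑ k, ‖y (e.symm k)‖ ^ q = ∑ k, ‖y k‖ ^ q := e.symm.sum_comp (‖y ·‖ ^ q)
  have hsigns : ∑ ε : Fin _ → Bool, ‖∑ k, (if ε k then (1 : ℝ) else -1) • y (e.symm k)‖ ^ 2 =
      ∑ ε : κ → Bool, ‖∑ k, (if ε k then (1 : ℝ) else -1) • y k‖ ^ 2 :=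
    Fintype.sum_equiv (e.arrowCongr (Equiv.refl Bool)).symm _ _ fun ε => by
      rw [← e.sum_comp]
      simp
  have := hY _ (y ∘ e.symm)
  simp only [Function.comp_apply] at this
  rwa [hnorms, hsigns] at this

theorem HasCotypeWith.sum_rpow_le (hY : HasCotypeWith Y q Cq) (hCq : 0 ≤ Cq) (hq : 0 < q)
    {r : ℝ} (hqr : q ≤ r) (hr : 2 ≤ r) {κ : Type} [Fintype κ] [DecidableEq κ] (y : κ → Y) :
    ∑ k, ‖y k‖ ^ r ≤ Cq ^ r *
      ((∑ ε : κ → Bool, ‖∑ k, (if ε k then (1 : ℝ) else -1) • y k‖ ^ r) / 2 ^ Fintype.card κ) := by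
  set H : (κ → Bool) → ℝ := fun ε => ‖∑ k, (if ε k then (1 : ℝ) else -1) • y k‖
  set w : ℝ := (2 ^ Fintype.card κ)⁻¹
  have hw : ∑ _ε : κ → Bool, w = 1 := by simp [w]
  have hmean : ((∑ ε, H ε ^ 2) / 2 ^ Fintype.card κ) ^ (r / 2) ≤
      (∑ ε, H ε ^ r) / 2 ^ Fintype.card κ := by
    have := Real.rpow_arith_mean_le_arith_mean_rpow univ (fun _ => w) (fun ε => H ε ^ 2)
      (fun _ _ => by positivity) hw (fun _ _ => by positivity) (p := r / 2) (by linarith)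
    simp only [← mul_sum] at this
    convert this using 2
    · rw [div_eq_inv_mul]
    · rw [div_eq_inv_mul]
      congr 1
      refine sum_congr rfl fun ε _ => ?_
      rw [← Real.rpow_natCast, ← Real.rpow_mul (norm_nonneg _)]
      congr 1
      push_cast
      ring
  have hq_sum : 0 ≤ ∑ k, ‖y k‖ ^ q := sum_nonneg fun _ _ => by positivity
  calc ∑ k, ‖y k‖ ^ r = ∑ k, (‖y k‖ ^ q) ^ (r / q) := sum_congr rfl fun k _ => by
        rw [← Real.rpow_mul (norm_nonneg _), mul_div_cancel₀ _ hq.ne']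
    _ ≤ (∑ k, ‖y k‖ ^ q) ^ (r / q) :=
        Real.sum_rpow_le_rpow_sum_s14 _ (fun _ _ => by positivity) ((one_le_div hq).2 hqr)
    _ = ((∑ k, ‖y k‖ ^ q) ^ (1 / q)) ^ r := by
        rw [← Real.rpow_mul hq_sum, one_div_mul_eq_div]
    _ ≤ (Cq * ((∑ ε, H ε ^ 2) / 2 ^ Fintype.card κ) ^ ((1 : ℝ) / 2)) ^ r := by
        gcongr
        exact hY κ y
    _ = Cq ^ r * ((∑ ε, H ε ^ 2) / 2 ^ Fintype.card κ) ^ (r / 2) := by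
        rw [Real.mul_rpow hCq (by positivity), ← Real.rpow_mul (by positivity), one_div_mul_eq_div]
    _ ≤ _ := by gcongr

theorem HasCotypeWith.sum_sum_rpow_le (hY : HasCotypeWith Y q Cq) (hCq : 0 ≤ Cq) (hq : 0 < q)
    {r : ℝ} (hqr : q ≤ r) (hr : 2 ≤ r) {κ : Type} [Fintype κ] [DecidableEq κ] {ι : Type*}
    (V : Finset ι) (u : κ → ι → Y) {B : ℝ} (hB : 0 ≤ B)
    (hu : ∀ ε : κ → Bool,
      ∑ v ∈ V, ‖∑ k, (if ε k then (1 : ℝ) else -1) • u k v‖ ^ r ≤ B ^ r) :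
    ∑ k, ∑ v ∈ V, ‖u k v‖ ^ r ≤ (Cq * B) ^ r := by
  calc ∑ k, ∑ v ∈ V, ‖u k v‖ ^ r = ∑ v ∈ V, ∑ k, ‖u k v‖ ^ r := sum_comm
    _ ≤ ∑ v ∈ V, Cq ^ r * ((∑ ε : κ → Bool,
          ‖∑ k, (if ε k then (1 : ℝ) else -1) • u k v‖ ^ r) / 2 ^ Fintype.card κ) :=
        sum_le_sum fun v _ => hY.sum_rpow_le hCq hq hqr hr (u · v)
    _ = Cq ^ r * ((∑ ε : κ → Bool, ∑ v ∈ V,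
          ‖∑ k, (if ε k then (1 : ℝ) else -1) • u k v‖ ^ r) / 2 ^ Fintype.card κ) := by
        rw [← mul_sum, ← sum_div, sum_comm]
    _ ≤ Cq ^ r * ((∑ _ε : κ → Bool, B ^ r) / 2 ^ Fintype.card κ) := by
        gcongr with ε
        exact hu ε
    _ = (Cq * B) ^ r := by simp [Real.mul_rpow hCq hB]

end Cotype

section WeakNorm

variable {E : Type*} [NormedAddCommGroup E] [NormedSpace ℝ E]

theorem norm_sum_smul_le_of_forall_sum_mul_abs_le {κ : Type*} [Fintype κ] (x : κ → E)
    {a c : κ → ℝ} (hac : ∀ k, |a k| ≤ c k) {M : ℝ}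
    (hc : ∀ φ : E →L[ℝ] ℝ, ‖φ‖ ≤ 1 → ∑ k, c k * |φ (x k)| ≤ M) :
    ‖∑ k, a k • x k‖ ≤ M := by
  obtain ⟨φ, hφ, hφx⟩ := exists_dual_vector'' ℝ (∑ k, a k • x k)
  calc ‖∑ k, a k • x k‖ = φ (∑ k, a k • x k) := by exact_mod_cast hφx.symm
    _ = ∑ k, a k * φ (x k) := by simp
    _ ≤ ∑ k, c k * |φ (x k)| := sum_le_sum fun k _ =>
        (le_abs_self _).trans (by rw [abs_mul]; gcongr; exact hac k)
    _ ≤ M := hc φ hφ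

theorem WeakNormLEOne.sum_mul_abs_le_one {p p' : ℝ} (hpp' : p'.HolderConjugate p) {x : ℕ → E}
    (hx : WeakNormLEOne p x) (W : Finset ℕ) {c : ℕ → ℝ} (hc0 : ∀ w ∈ W, 0 ≤ c w)
    (hc : ∑ w ∈ W, c w ^ p' ≤ 1) (φ : E →L[ℝ] ℝ) (hφ : ‖φ‖ ≤ 1) :
    ∑ w ∈ W, c w * |φ (x w)| ≤ 1 :=
  calc ∑ w ∈ W, c w * |φ (x w)|
      ≤ (∑ w ∈ W, c w ^ p') ^ (1 / p') * (∑ w ∈ W, |φ (x w)| ^ p) ^ (1 / p) :=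
        Real.inner_le_Lp_mul_Lq_of_nonneg W hpp' hc0 fun _ _ => abs_nonneg _
    _ ≤ 1 * 1 := by
        gcongr
        · exact Real.rpow_le_one (sum_nonneg fun w hw => by have := hc0 w hw; positivity) hc
            (by have := hpp'.pos; positivity)
        · exact Real.rpow_le_one (sum_nonneg fun _ _ => by positivity) (hx φ hφ W)
            (by have := hpp'.symm.pos; positivity)
    _ = 1 := one_mul 1

end WeakNorm

section LinearFamily

variable {Y : Type*} [NormedAddCommGroup Y] [NormedSpace ℝ Y] {q Cq : ℝ}
  {E : Type*} [NormedAddCommGroup E] [NormedSpace ℝ E]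

theorem HasCotypeWith.sum_mul_sum_rpow_le (hY : HasCotypeWith Y q Cq) (hCq : 0 ≤ Cq)
    (hq : 0 < q) {r : ℝ} (hqr : q ≤ r) (hr : 2 ≤ r) {ι : Type*} (G : ι → E →L[ℝ] Y)
    (V : Finset ι) {B : ℝ} (hB : 0 ≤ B) (hG : ∀ ξ : E, ‖ξ‖ ≤ 1 → ∑ v ∈ V, ‖G v ξ‖ ^ r ≤ B ^ r)
    {α : Type} (x : α → E) (W : Finset α) {c : α → ℝ} (hc0 : ∀ w ∈ W, 0 ≤ c w)
    (hc : ∀ φ : E →L[ℝ] ℝ, ‖φ‖ ≤ 1 → ∑ w ∈ W, c w * |φ (x w)| ≤ 1) :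
    ∑ w ∈ W, c w ^ r * ∑ v ∈ V, ‖G v (x w)‖ ^ r ≤ (Cq * B) ^ r := by
  classical
  have hsigns : ∀ ε : W → Bool, ∑ v ∈ V,
      ‖∑ k, (if ε k then (1 : ℝ) else -1) • c k • G v (x k)‖ ^ r ≤ B ^ r := by
    intro ε
    have hξ : ‖∑ k : W, ((if ε k then (1 : ℝ) else -1) * c k) • x k‖ ≤ 1 :=
      norm_sum_smul_le_of_forall_sum_mul_abs_le (fun k : W => x k)
        (fun k => by split_ifs <;> simp [abs_of_nonneg (hc0 k k.2)])
        (fun φ hφ => (W.sum_coe_sort _).trans_le (hc φ hφ))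
    refine le_of_eq_of_le (sum_congr rfl fun v _ => ?_) (hG _ hξ)
    simp only [map_sum, map_smul, smul_smul]
  calc ∑ w ∈ W, c w ^ r * ∑ v ∈ V, ‖G v (x w)‖ ^ r
      = ∑ k : W, ∑ v ∈ V, ‖c k • G v (x k)‖ ^ r := by
        rw [← W.sum_coe_sort]
        refine sum_congr rfl fun k _ => ?_
        simp only [mul_sum, norm_smul, Real.norm_eq_abs, abs_of_nonneg (hc0 k k.2),
          Real.mul_rpow (hc0 k k.2) (norm_nonneg _)]
    _ ≤ (Cq * B) ^ r := hY.sum_sum_rpow_le hCq hq hqr hr V _ hB hsigns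

theorem HasCotypeWith.sum_rpow_sum_rpow_le (hY : HasCotypeWith Y q Cq) (hCq : 0 ≤ Cq)
    (hq : 0 < q) {r s p : ℝ} (hqr : q ≤ r) (hr : 2 ≤ r) (hp : 1 ≤ p) (hs : 0 < s)
    (hrs : 1 / s = 1 / r - (1 - 1 / p)) {ι : Type*} (G : ι → E →L[ℝ] Y) (V : Finset ι)
    {B : ℝ} (hB : 0 ≤ B) (hG : ∀ ξ : E, ‖ξ‖ ≤ 1 → ∑ v ∈ V, ‖G v ξ‖ ^ r ≤ B ^ r)
    {x : ℕ → E} (hx : WeakNormLEOne p x) (W : Finset ℕ) :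
    ∑ w ∈ W, (∑ v ∈ V, ‖G v (x w)‖ ^ r) ^ (s / r) ≤ (Cq * B) ^ s := by
  have hr0 : 0 < r := by linarith
  have hL0 : ∀ w ∈ W, 0 ≤ ∑ v ∈ V, ‖G v (x w)‖ ^ r := fun w _ => sum_nonneg fun _ _ => by positivity
  have hweighted := fun c => hY.sum_mul_sum_rpow_le hCq hq hqr hr G V hB hG x W (c := c)
  rcases hp.eq_or_lt with rfl | hp1
  · obtain rfl : s = r := by simpa using hrs
    have := hweighted (fun _ => 1) (fun _ _ => zero_le_one) fun φ hφ => by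
      simpa using hx φ hφ W
    simpa [div_self hr0.ne'] using this
  · have hpp' := Real.HolderConjugate.conjExponent hp1
    set p' := p.conjExponent
    have hp' : 1 / p' = 1 - 1 / p := by
      simp only [one_div]; linarith [hpp'.inv_add_inv_eq_one]
    have hrs' : 1 / s = 1 / r - 1 / p' := by rw [hrs, hp']
    have hconj : (s / r).HolderConjugate (p' / r) := by
      rw [Real.holderConjugate_iff]
      refine ⟨?_, ?_⟩
      · refine (one_lt_div hr0).2 ((one_div_lt_one_div hs hr0).1 ?_)
        rw [hrs']
        linarith [one_div_pos.2 hpp'.symm.pos]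
      · calc (s / r)⁻¹ + (p' / r)⁻¹ = r * (1 / s + 1 / p') := by
              rw [inv_div, inv_div]; ring
          _ = 1 := by rw [hrs', sub_add_cancel, mul_one_div_cancel hr0.ne']
    have key := Real.sum_rpow_le_of_forall_sum_mul_le W hL0 hconj (M := (Cq * B) ^ r)
      fun d hd0 hd => by
        set c : ℕ → ℝ := fun w => d w ^ (1 / r)
        have hc0 : ∀ w ∈ W, 0 ≤ c w := fun w hw => Real.rpow_nonneg (hd0 w hw) _
        have hcr : ∀ w ∈ W, c w ^ r = d w := fun w hw => by
          rw [← Real.rpow_mul (hd0 w hw), one_div_mul_cancel hr0.ne', Real.rpow_one]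
        have hcp' : ∀ w ∈ W, c w ^ p' = d w ^ (p' / r) := fun w hw => by
          rw [← Real.rpow_mul (hd0 w hw), one_div_mul_eq_div]
        have hc : ∑ w ∈ W, c w ^ p' ≤ 1 := by rwa [sum_congr rfl hcp']
        calc ∑ w ∈ W, (∑ v ∈ V, ‖G v (x w)‖ ^ r) * d w
            = ∑ w ∈ W, c w ^ r * ∑ v ∈ V, ‖G v (x w)‖ ^ r :=
              sum_congr rfl fun w hw => by rw [hcr w hw, mul_comm]
          _ ≤ (Cq * B) ^ r := hweighted c hc0 (hx.sum_mul_abs_le_one hpp'.symm W hc0 hc)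
    calc _ ≤ ((Cq * B) ^ r) ^ (s / r) := key
      _ = (Cq * B) ^ s := by
        rw [← Real.rpow_mul (by positivity), mul_div_cancel₀ _ hr0.ne']

end LinearFamily

section CoordTuple

variable {m : ℕ} {X : Fin m → Type*}

def coordTuple (C : Finset (Fin m)) (x : ∀ j, ℕ → X j) (z : ∀ j, X j)
    (i : {j // j ∈ C} → ℕ) : ∀ j, X j :=
  fun j => if h : j ∈ C then x j (i ⟨j, h⟩) else z j

theorem coordTuple_insert {C : Finset (Fin m)} {j : Fin m} (x : ∀ j, ℕ → X j)
    (z : ∀ j, X j) (i : {k // k ∈ insert j C} → ℕ) :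
    coordTuple (insert j C) x z i =
      Function.update (coordTuple C x z fun k => i ⟨k, mem_insert_of_mem k.2⟩) j
        (x j (i ⟨j, mem_insert_self j C⟩)) := by
  funext k
  by_cases hk : k = j
  · subst hk
    simp [coordTuple]
  · by_cases hkC : k ∈ C <;> simp [coordTuple, hk, hkC]

theorem coordTuple_update {C : Finset (Fin m)} {j : Fin m} (hj : j ∉ C) (x : ∀ j, ℕ → X j)
    (z : ∀ j, X j) (ξ : X j) (i : {k // k ∈ C} → ℕ) :
    coordTuple C x (Function.update z j ξ) i = Function.update (coordTuple C x z i) j ξ := by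
  funext k
  by_cases hk : k = j
  · subst hk
    simp [coordTuple, hj]
  · by_cases hkC : k ∈ C <;> simp [coordTuple, hk, hkC]

end CoordTuple

section Multilinear

variable {m : ℕ} {X : Fin m → Type*} [∀ j, NormedAddCommGroup (X j)]
  [∀ j, NormedSpace ℝ (X j)] {Y : Type*} [NormedAddCommGroup Y] [NormedSpace ℝ Y] {q Cq : ℝ}

theorem HasCotypeWith.coordSummingWith_insert (hY : HasCotypeWith Y q Cq) (hCq : 0 ≤ Cq)
    (hq : 0 < q) {r s : ℝ} (hqr : q ≤ r) (hr : 2 ≤ r) {t : Fin m → ℝ} {C : Finset (Fin m)}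
    {j : Fin m} (hj : j ∉ C) (htj : 1 ≤ t j) (hs : 0 < s) (hrs : 1 / s = 1 / r - (1 - 1 / t j))
    (T : ContinuousMultilinearMap ℝ X Y) {B : ℝ} (hB : 0 ≤ B)
    (hT : ∀ z : ∀ k, X k, (∀ k ∉ C, ‖z k‖ ≤ 1) → CoordSummingWith T C r t z B)
    (z : ∀ k, X k) (hz : ∀ k ∉ insert j C, ‖z k‖ ≤ 1) :
    CoordSummingWith T (insert j C) s t z (Cq * B) := by
  intro x hx F
  have hr0 : 0 < r := by linarith
  have hrs_le : r ≤ s := by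
    refine (one_div_le_one_div hs hr0).1 ?_
    have : 1 / t j ≤ 1 := (div_le_one (by linarith)).2 htj
    linarith
  set res : ({k // k ∈ insert j C} → ℕ) → {k // k ∈ C} → ℕ :=
    fun i k => i ⟨k, mem_insert_of_mem k.2⟩
  set top : ({k // k ∈ insert j C} → ℕ) → ℕ := fun i => i ⟨j, mem_insert_self j C⟩
  set G : ({k // k ∈ C} → ℕ) → X j →L[ℝ] Y :=
    fun v => T.toContinuousLinearMap (coordTuple C x z v) j
  have hG : ∀ ξ : X j, ‖ξ‖ ≤ 1 → ∑ v ∈ F.image res, ‖G v ξ‖ ^ r ≤ B ^ r := by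
    intro ξ hξ
    have hzξ : ∀ k ∉ C, ‖Function.update z j ξ k‖ ≤ 1 := fun k hk => by
      by_cases hkj : k = j
      · subst hkj; simpa using hξ
      · simpa [hkj] using hz k (by simp [hkj, hk])
    simp only [G, ContinuousMultilinearMap.toContinuousLinearMap_apply, ← coordTuple_update hj]
    exact hT _ hzξ x (fun k hk => hx k (mem_insert_of_mem hk)) (F.image res)
  have hinj : Set.InjOn (fun i => (top i, res i)) F := fun i _ i' _ h => by
    simp only [Prod.mk.injEq] at h
    funext ⟨k, hk⟩
    rcases mem_insert.1 hk with rfl | hkC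
    · exact h.1
    · exact congrFun h.2 ⟨k, hkC⟩
  calc ∑ i ∈ F, ‖T (coordTuple (insert j C) x z i)‖ ^ s
      = ∑ i ∈ F, (‖G (res i) (x j (top i))‖ ^ r) ^ (s / r) :=
        sum_congr rfl fun i _ => by
          rw [coordTuple_insert, ← Real.rpow_mul (norm_nonneg _), mul_div_cancel₀ _ hr0.ne']
          rfl
    _ ≤ ∑ w ∈ F.image top, (∑ v ∈ F.image res, ‖G v (x j w)‖ ^ r) ^ (s / r) :=
        Real.sum_rpow_le_sum_rpow_sum_of_injOn F top res hinj (fun w v => ‖G v (x j w)‖ ^ r)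
          (fun _ _ => by positivity) ((one_le_div hr0).2 hrs_le)
    _ ≤ (Cq * B) ^ s :=
        hY.sum_rpow_sum_rpow_le hCq hq hqr hr htj hs hrs G _ hB hG (hx j (mem_insert_self j C)) _

theorem HasCotypeWith.coordSummingWith_union (hY : HasCotypeWith Y q Cq) (hCq : 0 ≤ Cq)
    (hq : 0 < q) {r : ℝ} (hqr : q ≤ r) (hr : 2 ≤ r) {t : Fin m → ℝ}
    (T : ContinuousMultilinearMap ℝ X Y) {B : ℝ} (hB : 0 ≤ B) {C : Finset (Fin m)}
    (hT : ∀ z : ∀ k, X k, (∀ k ∉ C, ‖z k‖ ≤ 1) → CoordSummingWith T C r t z B)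
    {D : Finset (Fin m)} (hCD : Disjoint C D) (ht : ∀ j ∈ D, 1 ≤ t j) {s : ℝ} (hs : 0 < s)
    (hrs : 1 / s = 1 / r - ∑ j ∈ D, (1 - 1 / t j)) (z : ∀ k, X k)
    (hz : ∀ k ∉ C ∪ D, ‖z k‖ ≤ 1) :
    CoordSummingWith T (C ∪ D) s t z (Cq ^ #D * B) := by
  induction D using Finset.induction_on generalizing s z with
  | empty =>
    obtain rfl : s = r := by simpa using hrs
    simpa using hT z (by simpa using hz)
  | @insert j D hjD ih =>
    have hterm : ∀ k ∈ insert j D, 0 ≤ 1 - 1 / t k := fun k hk => by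
      have : 1 / t k ≤ 1 := (div_le_one (by linarith [ht k hk])).2 (ht k hk)
      linarith
    rw [sum_insert hjD] at hrs
    have hD : 0 ≤ ∑ k ∈ D, (1 - 1 / t k) :=
      sum_nonneg fun k hk => hterm k (mem_insert_of_mem hk)
    set s' := (1 / r - ∑ k ∈ D, (1 - 1 / t k))⁻¹
    have hs'_pos : 0 < 1 / r - ∑ k ∈ D, (1 - 1 / t k) := by
      linarith [one_div_pos.2 hs, hterm j (mem_insert_self j D)]
    have hs'r : 1 / s' ≤ 1 / r := by rw [one_div s', inv_inv]; linarith
    have hrs' : r ≤ s' := (one_div_le_one_div (inv_pos.2 hs'_pos) (by linarith)).1 hs'r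
    have hj : j ∉ C ∪ D := by
      simp only [mem_union, not_or]
      exact ⟨disjoint_right.1 hCD (mem_insert_self j D), hjD⟩
    have hstep := hY.coordSummingWith_insert hCq hq (hqr.trans hrs') (hr.trans hrs') hj
      (ht j (mem_insert_self j D)) hs (by rw [one_div s', inv_inv]; linarith) T
      (by positivity)
      (ih (disjoint_insert_right.1 hCD).2 (fun k hk => ht k (mem_insert_of_mem hk))
        (inv_pos.2 hs'_pos) (by rw [one_div s', inv_inv])) z
      (by rwa [← union_insert])
    rwa [union_insert, card_insert_of_notMem hjD, pow_succ, mul_comm _ Cq, mul_assoc]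

theorem CoordSummingWith.multSummingWith {T : ContinuousMultilinearMap ℝ X Y} {s : ℝ}
    {t : Fin m → ℝ} {z : ∀ k, X k} {B : ℝ} (h : CoordSummingWith T univ s t z B) :
    MultSummingWith T s t B := by
  intro x hx F
  have hinj : Set.InjOn (fun i : Fin m → ℕ => fun k : {k // k ∈ univ} => i k) F :=
    fun i _ i' _ h => funext fun k => congrFun h ⟨k, mem_univ k⟩
  simpa [sum_image hinj] using h x (fun j _ => hx j) (F.image fun i k => i k)

end Multilinear

theorem stmt14_general {m : ℕ} {X : Fin m → Type*} [∀ j, NormedAddCommGroup (X j)]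
    [∀ j, NormedSpace ℝ (X j)]
    {Y : Type*} [NormedAddCommGroup Y] [NormedSpace ℝ Y]
    {q : ℝ} (hq : 2 ≤ q) (hY : HasCotype Y q)
    (qq : Fin m → ℝ) (hqq : ∀ k, 1 ≤ qq k)
    (C : Finset (Fin m))
    (s r : ℝ) (hs1 : 1 ≤ s)
    (hrs : 1 / r = 1 / s + ∑ j ∈ Finset.univ \ C, (1 - 1 / qq j))
    (hrq : q ≤ r) :
    ∃ κ > 0, ∀ T : ContinuousMultilinearMap ℝ X Y, ∀ B : ℝ, 0 ≤ B →
      (∀ z : ∀ j, X j, (∀ j ∉ C, ‖z j‖ ≤ 1) → CoordSummingWith T C r qq z B) →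
      MultSummingWith T s qq (κ * B) := by
  obtain ⟨Cq, hCq, hYc⟩ := hY.exists_hasCotypeWith
  refine ⟨Cq ^ #(univ \ C), by positivity, fun T B hB hT => ?_⟩
  have h := hYc.coordSummingWith_union hCq.le (by linarith) hrq (hq.trans hrq) T hB hT
    disjoint_sdiff (fun j _ => hqq j) (s := s) (by linarith) (by rw [hrs]; ring) 0 (by simp)
  rw [union_sdiff_of_subset (subset_univ C)] at h
  exact h.multSummingWith

/-- Lemma 4.2: with `Y` of cotype `q`, `1/r = 1/s + Σ_{j∈C̄} 1/q_j*`, `r ≥ q` and `s ≥ q_k`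
for all `k`, there is κ > 0 (independent of `T`) with
`π^mult_{s,𝐪}(T) ≤ κ · sup { π^mult_{r,𝐭}(T^C(z)) : ‖z‖_{X^{C̄}} ≤ 1 }`, expressed via
admissible constants: any uniform admissible constant `B` for the maps `T^C(z)`,
`‖z‖_{X^{C̄}} ≤ 1`, makes `κ·B` admissible for `T`. -/
theorem stmt14 {m : ℕ} (hm : 1 ≤ m) {X : Fin m → Type*} [∀ j, NormedAddCommGroup (X j)]
    [∀ j, NormedSpace ℝ (X j)] [∀ j, CompleteSpace (X j)]
    {Y : Type*} [NormedAddCommGroup Y] [NormedSpace ℝ Y] [CompleteSpace Y]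
    {q : ℝ} (hq : 2 ≤ q) (hY : HasCotype Y q)
    (qq : Fin m → ℝ) (hqq : ∀ k, 1 ≤ qq k)
    (C : Finset (Fin m))
    (s r : ℝ) (hs1 : 1 ≤ s) (hr1 : 1 ≤ r)
    (hrs : 1 / r = 1 / s + ∑ j ∈ Finset.univ \ C, (1 - 1 / qq j))
    (hrq : q ≤ r) (hsq : ∀ k, qq k ≤ s) :
    ∃ κ > 0, ∀ T : ContinuousMultilinearMap ℝ X Y, ∀ B : ℝ, 0 ≤ B →
      (∀ z : ∀ j, X j, (∀ j ∉ C, ‖z j‖ ≤ 1) → CoordSummingWith T C r qq z B) →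
      MultSummingWith T s qq (κ * B) :=
  stmt14_general hq hY qq hqq C s r hs1 hrs hrq
end
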